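/- arXiv:1809.02518 — 7 statements merged into one kernel-verified Lean document; each statement's English description precedes it below -/
import Mathlib

section
/- Let ε > 0 and let q be a natural number. Suppose ψ : (ℤ/qℤ)ˣ → ℂ satisfies: |ψ(b)| ≤ C for all b (for some absolute constant C), ψ(1) = 1, and |ψ(b₁b₂) − ψ(b₁)ψ(b₂)| ≤ ε for all b₁, b₂ ∈ (ℤ/qℤ)ˣ. Then, provided ε is sufficiently small (depending only on C), there exists a group homomorphism χ : (ℤ/qℤ)ˣ → ℂˣ taking values in the unit circle such that |ψ(b) − χ(b)| ≤ C'·ε for all b ∈ (ℤ/qℤ)ˣ, where C' depends only on C. -/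
/-!
The defect `ψ (x y) / (ψ x ψ y)` of an approximate character `ψ` is a multiplicative 2-cocycle
close to `1`, so its principal logarithm `L` is an additive 2-cocycle: the two sides of the
cocycle identity have the same exponential and differ by less than `2π`. On a finite group,
averaging in the last variable writes `L x y = A x + A y - A (x y)`, with `A` as small as `L`.
Then `ψ · exp A` is an exact character close to `ψ`, unimodular because its values are roots
of unity.
-/

open Complex Finset
open scoped BigOperators

theorem eq_coboundary_of_cocycle {G M : Type*} [Group G] [Fintype G] [AddCommGroup M]
    [Module ℚ≥0 M] (L : G → G → M)
    (hL : ∀ x y z, L x y + L (x * y) z = L y z + L x (y * z)) (x y : G) :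
    L x y = 𝔼 z, L x z + 𝔼 z, L y z - 𝔼 z, L (x * y) z := by
  have hshift : 𝔼 z, L x (y * z) = 𝔼 z, L x z :=
    Fintype.expect_equiv (Equiv.mulLeft y) _ _ fun _ => rfl
  calc L x y = 𝔼 z, (L y z + L x (y * z) - L (x * y) z) := by
        simp_rw [← hL, add_sub_cancel_right, Fintype.expect_const]
    _ = 𝔼 z, L x z + 𝔼 z, L y z - 𝔼 z, L (x * y) z := by
        rw [expect_sub_distrib, expect_add_distrib, hshift, add_comm (𝔼 z, L y z)]

theorem Complex.eq_of_exp_eq_of_norm_sub_lt {u v : ℂ} (h : exp u = exp v)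
    (huv : ‖u - v‖ < 2 * Real.pi) : u = v := by
  obtain ⟨n, hn⟩ := exp_eq_exp_iff_exists_int.mp h
  have hnorm : ‖u - v‖ = |(n : ℝ)| * (2 * Real.pi) := by
    simp [hn, abs_of_pos Real.pi_pos]
  have hn0 : n = 0 := by
    by_contra hn0
    have : (1 : ℝ) ≤ |(n : ℝ)| := by exact_mod_cast Int.one_le_abs hn0
    nlinarith [Real.pi_pos]
  simpa [hn0] using hn

theorem exists_mul_exp_map_mul {G : Type*} [Group G] [Fintype G] {ψ : G → ℂ} {δ : ℝ}
    (hψ : ∀ x, ψ x ≠ 0) (hδ : δ ≤ 1 / 2)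
    (h : ∀ x y, ‖ψ (x * y) / (ψ x * ψ y) - 1‖ ≤ δ) :
    ∃ A : G → ℂ, (∀ x, ‖A x‖ ≤ 3 / 2 * δ) ∧
      ∀ x y, ψ (x * y) * exp (A (x * y)) = ψ x * exp (A x) * (ψ y * exp (A y)) := by
  set L : G → G → ℂ := fun x y => log (ψ (x * y) / (ψ x * ψ y))
  have hexpL (x y : G) : exp (L x y) = ψ (x * y) / (ψ x * ψ y) :=
    exp_log (div_ne_zero (hψ _) (mul_ne_zero (hψ x) (hψ y)))
  have hL (x y : G) : ‖L x y‖ ≤ 3 / 2 * δ := by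
    have := norm_log_one_add_half_le_self ((h x y).trans hδ)
    rw [add_sub_cancel] at this
    exact this.trans (by gcongr; exact h x y)
  have hcocycle (x y z : G) : L x y + L (x * y) z = L y z + L x (y * z) := by
    refine eq_of_exp_eq_of_norm_sub_lt ?_ ?_
    · simp only [exp_add, hexpL, mul_assoc]
      field_simp [hψ]
    · calc ‖L x y + L (x * y) z - (L y z + L x (y * z))‖
          ≤ ‖L x y‖ + ‖L (x * y) z‖ + (‖L y z‖ + ‖L x (y * z)‖) :=
            (norm_sub_le _ _).trans (add_le_add (norm_add_le _ _) (norm_add_le _ _))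
        _ ≤ 3 := by linarith [hL x y, hL (x * y) z, hL y z, hL x (y * z)]
        _ < 2 * Real.pi := by linarith [Real.pi_gt_three]
  refine ⟨fun x => 𝔼 z, L x z, fun x => ?_, fun x y => ?_⟩
  · exact (RCLike.norm_expect_le (K := ℝ)).trans (expect_le univ_nonempty fun z _ => hL x z)
  · have hψxy : ψ (x * y) = ψ x * ψ y * exp (L x y) := by
      rw [hexpL]
      field_simp [hψ]
    rw [hψxy, eq_coboundary_of_cocycle L hcocycle x y, exp_sub, exp_add]
    field_simp [exp_ne_zero]

theorem one_sub_le_mul_norm_of_norm_map_mul_sub_le {G : Type*} [Group G] {ψ : G → ℂ}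
    {C ε : ℝ} (hb : ∀ b, ‖ψ b‖ ≤ C) (h1 : ψ 1 = 1)
    (hm : ∀ b₁ b₂, ‖ψ (b₁ * b₂) - ψ b₁ * ψ b₂‖ ≤ ε) (b : G) :
    1 - ε ≤ C * ‖ψ b‖ := by
  have hinv := hm b b⁻¹
  rw [mul_inv_cancel, h1] at hinv
  have := norm_sub_norm_le (1 : ℂ) (ψ b * ψ b⁻¹)
  rw [norm_one, norm_mul] at this
  nlinarith [mul_le_mul_of_nonneg_left (hb b⁻¹) (norm_nonneg (ψ b))]

theorem exists_monoidHom_norm_sub_le {G : Type*} [Group G] [Finite G] {C ε : ℝ}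
    (hε : ε ≤ 1 / (8 * C ^ 2)) (ψ : G → ℂ) (hb : ∀ b, ‖ψ b‖ ≤ C) (h1 : ψ 1 = 1)
    (hm : ∀ b₁ b₂, ‖ψ (b₁ * b₂) - ψ b₁ * ψ b₂‖ ≤ ε) :
    ∃ χ : G →* ℂˣ, (∀ b, ‖((χ b : ℂˣ) : ℂ)‖ = 1) ∧
      ∀ b, ‖ψ b - ((χ b : ℂˣ) : ℂ)‖ ≤ 12 * C ^ 3 * ε := by
  have := Fintype.ofFinite G
  have hC : 1 ≤ C := by simpa [h1] using hb 1
  have hδ : 4 * C ^ 2 * ε ≤ 1 / 2 := by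
    rw [le_div_iff₀ (by positivity)] at hε
    linarith
  have hlow (b : G) : 1 ≤ 2 * C * ‖ψ b‖ := by
    nlinarith [one_sub_le_mul_norm_of_norm_map_mul_sub_le hb h1 hm b]
  have hψ (b : G) : ψ b ≠ 0 := by
    intro h0
    have := hlow b
    norm_num [h0] at this
  have hdefect (x y : G) : ‖ψ (x * y) / (ψ x * ψ y) - 1‖ ≤ 4 * C ^ 2 * ε := by
    rw [div_sub_one (mul_ne_zero (hψ x) (hψ y)), norm_div, norm_mul,
      div_le_iff₀ (mul_pos (norm_pos_iff.2 (hψ x)) (norm_pos_iff.2 (hψ y)))]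
    have hprod : 1 ≤ 4 * C ^ 2 * (‖ψ x‖ * ‖ψ y‖) := by
      nlinarith [mul_le_mul (hlow x) (hlow y) zero_le_one (by linarith [hlow x])]
    nlinarith [hm x y, (norm_nonneg _).trans (hm x y)]
  obtain ⟨A, hA, hmul⟩ := exists_mul_exp_map_mul hψ hδ hdefect
  let χ : G →* ℂˣ := MonoidHom.mk'
    (fun b => Units.mk0 (ψ b * exp (A b)) (mul_ne_zero (hψ b) (exp_ne_zero _)))
    fun x y => Units.ext (hmul x y)
  refine ⟨χ, fun b => norm_eq_one_of_pow_eq_one (n := Nat.card G) ?_ Nat.card_pos.ne',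
    fun b => ?_⟩
  · simpa using congrArg Units.val (show χ b ^ Nat.card G = 1 by
      rw [← map_pow, pow_card_eq_one', map_one])
  · have hAb : ‖A b‖ ≤ 3 / 2 * (4 * C ^ 2 * ε) := hA b
    calc ‖ψ b - ψ b * exp (A b)‖ = ‖ψ b‖ * ‖exp (A b) - 1‖ := by
          rw [← norm_mul, mul_sub, mul_one, norm_sub_rev]
      _ ≤ C * (2 * (3 / 2 * (4 * C ^ 2 * ε))) := by
          gcongr
          · exact hb b
          · exact (norm_exp_sub_one_le (by linarith)).trans (by gcongr)
      _ = 12 * C ^ 3 * ε := by ring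

/-- Stability of Dirichlet characters: an approximate character on `(ZMod q)ˣ`
is uniformly close to an exact character. -/
theorem stmt0 (C : ℝ) (hC : 0 < C) :
    ∃ ε₀ > (0:ℝ), ∃ C' > (0:ℝ), ∀ ε : ℝ, 0 < ε → ε ≤ ε₀ →
      ∀ (q : ℕ) (ψ : (ZMod q)ˣ → ℂ),
        (∀ b, ‖ψ b‖ ≤ C) →
        ψ 1 = 1 →
        (∀ b₁ b₂, ‖ψ (b₁ * b₂) - ψ b₁ * ψ b₂‖ ≤ ε) →
        ∃ χ : (ZMod q)ˣ →* ℂˣ,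
          (∀ b, ‖((χ b : ℂˣ) : ℂ)‖ = 1) ∧
          (∀ b, ‖ψ b - ((χ b : ℂˣ) : ℂ)‖ ≤ C' * ε) := by
  refine ⟨1 / (8 * C ^ 2), by positivity, 12 * C ^ 3, by positivity, ?_⟩
  intro ε _ hε q ψ hb h1 hm
  exact exists_monoidHom_norm_sub_le hε ψ hb h1 hm
end

section
/- Let ε > 0 be sufficiently small, and let α : (0,∞) → ℂ be a Lebesgue measurable function satisfying: |α(x)| ≤ C for all x > 0 (for an absolute constant C), |α(x) − 1| ≤ ε whenever |x − 1| ≤ ε, and |α(xy) − α(x)α(y)| ≤ ε for all x, y > 0. Then there exists a real number t such that |α(x) − x^{−it}| ≤ C'·ε for all x > 0, where C' depends only on C. -/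
/-!
Put `β u = α (exp u)`, an approximate character of `(ℝ, +)`. Averaging `β` over a short interval
gives a continuous `h` with `‖β - h‖ ≤ 2ε` that is still approximately multiplicative, bounded and
bounded away from `0`. Lift `h` through the covering `exp : ℂ → ℂ \ {0}` to a continuous `Λ`. For
fixed `u`, the defect `v ↦ Λ (u + v) - Λ u - Λ v` is continuous, vanishes at `v = 0` and takes
values near `2πiℤ`, so by connectedness it stays near `0`. The Hyers–Ulam limit of
`2⁻ⁿ Λ (2ⁿ u)` is then continuous and additive, hence of the form `u z`, and `Λ u - u z = O(ε)`.
Since `h` is bounded, `Re z = 0`, so `h` and `β` are `O(ε)`-close to `exp (u z) = exp (-i t u)`.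
-/

open Complex Filter MeasureTheory Topology
open scoped Real

theorem Continuous.exists_exp_lift {A : Type*} [TopologicalSpace A] [SimplyConnectedSpace A]
    [LocallyPathConnectedSpace A] {h : A → ℂ} (hc : Continuous h) (hne : ∀ a, h a ≠ 0)
    {a₀ : A} {e₀ : ℂ} (he : exp e₀ = h a₀) :
    ∃ Λ : A → ℂ, Continuous Λ ∧ Λ a₀ = e₀ ∧ ∀ a, exp (Λ a) = h a := by
  obtain ⟨Λ, ⟨hΛ₀, hΛ⟩, -⟩ :=
    isCoveringMapOn_exp.existsUnique_continuousMap_lifts ⟨h, hc⟩ he hne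
  exact ⟨Λ, Λ.continuous, hΛ₀, congrFun hΛ⟩

theorem Complex.exists_int_norm_sub_le_of_norm_exp_sub_one_le {w : ℂ}
    (hw : ‖exp w - 1‖ ≤ 1 / 2) :
    ∃ k : ℤ, ‖w - k * (2 * π * I)‖ ≤ 3 / 2 * ‖exp w - 1‖ := by
  obtain ⟨k, hk⟩ := exp_eq_exp_iff_exists_int.1 (exp_log (exp_ne_zero w)).symm
  refine ⟨k, ?_⟩
  nth_rw 1 [hk]
  rw [add_sub_cancel_right]
  simpa using norm_log_one_add_half_le_self hw

theorem norm_le_of_forall_norm_exp_sub_one_le {X : Type*} [TopologicalSpace X]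
    [PreconnectedSpace X] {ψ : X → ℂ} (hψ : Continuous ψ) {x₀ : X} (h₀ : ψ x₀ = 0) {η : ℝ}
    (hη : η ≤ 1 / 2) (hexp : ∀ x, ‖exp (ψ x) - 1‖ ≤ η) (x : X) : ‖ψ x‖ ≤ 3 / 2 * η := by
  have hsmall : ∀ x, ‖ψ x‖ < π → ‖ψ x‖ ≤ 3 / 2 * η := by
    intro x hx
    obtain ⟨k, hk⟩ :=
      exists_int_norm_sub_le_of_norm_exp_sub_one_le ((hexp x).trans hη)
    have hk' : ‖ψ x - k * (2 * π * I)‖ ≤ 3 / 4 := by linarith [hexp x]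
    obtain rfl : k = 0 := by
      by_contra hk0
      have h1 : (1 : ℝ) ≤ |(k : ℝ)| := by exact_mod_cast Int.one_le_abs hk0
      have h2 : ‖(k : ℂ) * (2 * π * I)‖ = |(k : ℝ)| * (2 * π) := by
        simp [abs_of_pos Real.pi_pos]
      have := norm_sub_norm_le ((k : ℂ) * (2 * π * I)) (ψ x)
      rw [norm_sub_rev] at this
      nlinarith [Real.pi_gt_three]
    simpa using hk.trans (by linarith [hexp x])
  have hclopen : IsClopen {x | ‖ψ x‖ ≤ 3 / 2 * η} := by
    refine ⟨isClosed_le (by fun_prop) continuous_const, ?_⟩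
    convert isOpen_lt hψ.norm (continuous_const (y := π)) using 1
    ext x
    exact ⟨fun (h : ‖ψ x‖ ≤ 3 / 2 * η) => h.trans_lt (by linarith [Real.pi_gt_three]), hsmall x⟩
  have hη₀ : 0 ≤ η := (norm_nonneg _).trans (hexp x₀)
  exact Set.eq_univ_iff_forall.1 (hclopen.eq_univ ⟨x₀, by simp [h₀]; linarith⟩) x

noncomputable def hyersSeq {G E : Type*} [AddMonoid G] [NormedAddCommGroup E] [NormedSpace ℝ E]
    (f : G → E) (n : ℕ) (x : G) : E :=
  (2⁻¹ : ℝ) ^ n • f (2 ^ n • x)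

section HyersUlam

variable {G E : Type*} [AddCommMonoid G] [NormedAddCommGroup E] [NormedSpace ℝ E] {f : G → E}
  {δ : ℝ}

theorem norm_inv_two_pow_smul_le {v : E} (hv : ‖v‖ ≤ δ) (n : ℕ) :
    ‖(2⁻¹ : ℝ) ^ n • v‖ ≤ δ * 2⁻¹ ^ n := by
  rw [norm_smul, mul_comm]
  simpa using mul_le_mul_of_nonneg_right hv (by positivity : (0 : ℝ) ≤ 2⁻¹ ^ n)

variable (hδ : ∀ x y, ‖f (x + y) - f x - f y‖ ≤ δ)
include hδ

theorem norm_hyersSeq_add_sub_le (n : ℕ) (x y : G) :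
    ‖hyersSeq f n (x + y) - hyersSeq f n x - hyersSeq f n y‖ ≤ δ * 2⁻¹ ^ n := by
  have e : hyersSeq f n (x + y) - hyersSeq f n x - hyersSeq f n y
      = (2⁻¹ : ℝ) ^ n • (f (2 ^ n • x + 2 ^ n • y) - f (2 ^ n • x) - f (2 ^ n • y)) := by
    simp only [hyersSeq, nsmul_add, smul_sub]
  exact e ▸ norm_inv_two_pow_smul_le (hδ _ _) n

theorem dist_hyersSeq_succ_le (n : ℕ) (x : G) :
    dist (hyersSeq f n x) (hyersSeq f (n + 1) x) ≤ δ / 2 * 2⁻¹ ^ n := by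
  set y := 2 ^ n • x
  have hy : 2 ^ (n + 1) • x = y + y := by rw [pow_succ, mul_nsmul, two_nsmul]
  have e : hyersSeq f n x - hyersSeq f (n + 1) x
      = -((2⁻¹ : ℝ) ^ (n + 1) • (f (y + y) - f y - f y)) := by
    simp only [hyersSeq]
    rw [hy]
    module
  rw [dist_eq_norm, e, norm_neg]
  calc _ ≤ δ * 2⁻¹ ^ (n + 1) := norm_inv_two_pow_smul_le (hδ y y) _
    _ = δ / 2 * 2⁻¹ ^ n := by ring

theorem exists_dist_hyersSeq_le [CompleteSpace E] :
    ∃ A : G → E, ∀ n x, dist (hyersSeq f n x) (A x) ≤ δ * 2⁻¹ ^ n := by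
  have hlim : ∀ x, ∃ a, Tendsto (hyersSeq f · x) atTop (𝓝 a) := fun x =>
    cauchySeq_tendsto_of_complete
      (cauchySeq_of_le_geometric _ _ (by norm_num) (dist_hyersSeq_succ_le hδ · x))
  choose A hA using hlim
  refine ⟨A, fun n x => ?_⟩
  convert dist_le_of_le_geometric_of_tendsto _ _ (by norm_num)
    (dist_hyersSeq_succ_le hδ · x) (hA x) n using 1
  ring

theorem exists_continuous_addMonoidHom_norm_sub_le [TopologicalSpace G] [ContinuousAdd G]
    [CompleteSpace E] (hf : Continuous f) :
    ∃ A : G →+ E, Continuous A ∧ ∀ x, ‖f x - A x‖ ≤ δ := by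
  obtain ⟨A, hA⟩ := exists_dist_hyersSeq_le hδ
  have hgeom : Tendsto (fun n : ℕ => δ * (2⁻¹ : ℝ) ^ n) atTop (𝓝 0) := by
    simpa using (tendsto_pow_atTop_nhds_zero_of_lt_one (by norm_num : (0 : ℝ) ≤ 2⁻¹)
      (by norm_num)).const_mul δ
  have hunif : TendstoUniformly (hyersSeq f) A atTop := by
    rw [Metric.tendstoUniformly_iff]
    intro r hr
    filter_upwards [hgeom.eventually (gt_mem_nhds hr)] with n hn x
    rw [dist_comm]
    exact (hA n x).trans_lt hn
  have hadd : ∀ x y, A (x + y) = A x + A y := by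
    intro x y
    have hdefect : Tendsto (fun n => hyersSeq f n (x + y) - hyersSeq f n x - hyersSeq f n y)
        atTop (𝓝 0) :=
      squeeze_zero_norm (fun n => norm_hyersSeq_add_sub_le hδ n x y) hgeom
    have := tendsto_nhds_unique
      (((hunif.tendsto_at (x + y)).sub (hunif.tendsto_at x)).sub (hunif.tendsto_at y)) hdefect
    rwa [sub_sub, sub_eq_zero] at this
  refine ⟨AddMonoidHom.mk' A hadd, hunif.continuous (Eventually.of_forall fun n =>
    continuous_const.smul (hf.comp (continuous_nsmul _))).frequently, fun x => ?_⟩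
  simpa [hyersSeq, dist_eq_norm] using hA 0 x

end HyersUlam

theorem eq_zero_of_forall_mul_le {a M : ℝ} (h : ∀ u, u * a ≤ M) : a = 0 := by
  by_contra ha
  have := h ((|M| + 1) / a)
  rw [div_mul_cancel₀ _ ha] at this
  linarith [le_abs_self M]

theorem exists_norm_exp_sub_exp_le {Λ : ℝ → ℂ} (hc : Continuous Λ) {κ M : ℝ}
    (hadd : ∀ u v, ‖Λ (u + v) - Λ u - Λ v‖ ≤ κ) (hκ : κ ≤ 1) (hre : ∀ u, (Λ u).re ≤ M) :
    ∃ t : ℝ, ∀ u : ℝ, ‖exp (Λ u) - exp (-(I * t * u))‖ ≤ 2 * κ := by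
  obtain ⟨A, hAc, hA⟩ := exists_continuous_addMonoidHom_norm_sub_le hadd hc
  have hlin : ∀ u : ℝ, A u = u * A 1 := fun u => by
    simpa using map_real_smul A hAc u 1
  have hre0 : (A 1).re = 0 := eq_zero_of_forall_mul_le (M := M + κ) fun u => by
    have h1 : u * (A 1).re = (A u).re := by simp [hlin u]
    have h2 := (abs_le.1 ((abs_re_le_norm _).trans (hA u))).1
    rw [sub_re] at h2
    linarith [hre u]
  refine ⟨-(A 1).im, fun u => ?_⟩
  have hA' : -(I * ((-(A 1).im : ℝ) : ℂ) * u) = A u := by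
    rw [hlin u]
    apply Complex.ext <;> simp [hre0, mul_comm]
  rw [hA']
  have hunit : ‖exp (A u)‖ = 1 := by simp [norm_exp, hlin u, hre0]
  calc ‖exp (Λ u) - exp (A u)‖ = ‖exp (A u) * (exp (Λ u - A u) - 1)‖ := by
        rw [mul_sub, ← exp_add, add_sub_cancel, mul_one]
    _ = ‖exp (Λ u - A u) - 1‖ := by rw [norm_mul, hunit, one_mul]
    _ ≤ 2 * ‖Λ u - A u‖ := norm_exp_sub_one_le ((hA u).trans hκ)
    _ ≤ 2 * κ := by linarith [hA u]

theorem norm_map_add_sub_mul_le_of_norm_sub_le {G : Type*} [Add G] {f g : G → ℂ} {C δ η : ℝ}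
    (hC : ∀ x, ‖f x‖ ≤ C) (hf : ∀ x y, ‖f (x + y) - f x * f y‖ ≤ δ)
    (hfg : ∀ x, ‖f x - g x‖ ≤ η) (x y : G) :
    ‖g (x + y) - g x * g y‖ ≤ δ + (2 * C + 1 + η) * η := by
  have hg : ‖g y‖ ≤ C + η :=
    (norm_le_norm_add_norm_sub (f y) (g y)).trans (add_le_add (hC y) (hfg y))
  have e : g (x + y) - g x * g y = (f (x + y) - f x * f y) - (f (x + y) - g (x + y))
      + f x * (f y - g y) + (f x - g x) * g y := by ring
  calc _ ≤ ‖f (x + y) - f x * f y‖ + ‖f (x + y) - g (x + y)‖ + ‖f x‖ * ‖f y - g y‖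
        + ‖f x - g x‖ * ‖g y‖ := by
        rw [e, ← norm_mul, ← norm_mul]
        exact (norm_add_le _ _).trans (add_le_add_left ((norm_add_le _ _).trans
          (add_le_add_left (norm_sub_le _ _) _)) _)
    _ ≤ δ + η + C * η + η * (C + η) := by
        have := (norm_nonneg _).trans (hfg x)
        have := (norm_nonneg _).trans (hC x)
        gcongr
        exacts [hf x y, hfg _, hC x, hfg y, hfg x]
    _ = δ + (2 * C + 1 + η) * η := by ring

theorem inv_two_mul_le_norm_of_approx_mul {G : Type*} [AddGroup G] {h : G → ℂ} (h₀ : h 0 = 1)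
    {B δ : ℝ} (hB : ∀ u, ‖h u‖ ≤ B) (hmul : ∀ u v, ‖h (u + v) - h u * h v‖ ≤ δ)
    (hδ : δ ≤ 1 / 2) (u : G) : (2 * B)⁻¹ ≤ ‖h u‖ := by
  have hB1 : 1 ≤ B := by simpa [h₀] using hB 0
  have hprod : 1 - δ ≤ ‖h u * h (-u)‖ := by
    have := norm_sub_norm_le (1 : ℂ) (1 - h u * h (-u))
    rw [sub_sub_cancel, norm_one] at this
    have := hmul u (-u)
    rw [add_neg_cancel, h₀] at this
    linarith
  have : 1 - δ ≤ ‖h u‖ * B := hprod.trans (by rw [norm_mul]; gcongr; exact hB _)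
  rw [inv_le_iff_one_le_mul₀ (by positivity)]
  nlinarith

theorem exists_log_approx_add_of_approx_mul {G : Type*} [AddGroup G] [TopologicalSpace G]
    [ContinuousAdd G] [SimplyConnectedSpace G] [LocallyPathConnectedSpace G] {h : G → ℂ}
    (hc : Continuous h) (h₀ : h 0 = 1) {B δ : ℝ} (hB : ∀ u, ‖h u‖ ≤ B)
    (hmul : ∀ u v, ‖h (u + v) - h u * h v‖ ≤ δ) (hδ : 8 * B ^ 2 * δ ≤ 1) :
    ∃ Λ : G → ℂ, Continuous Λ ∧ (∀ u, exp (Λ u) = h u) ∧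
      ∀ u v, ‖Λ (u + v) - Λ u - Λ v‖ ≤ 6 * B ^ 2 * δ := by
  have hB1 : 1 ≤ B := by simpa [h₀] using hB 0
  have hδ' : δ ≤ 1 / 2 := by nlinarith
  have hδ0 : 0 ≤ δ := (norm_nonneg _).trans (hmul 0 0)
  have hlow := inv_two_mul_le_norm_of_approx_mul h₀ hB hmul hδ'
  have hne : ∀ u, h u ≠ 0 := fun u =>
    norm_pos_iff.1 ((by positivity : (0 : ℝ) < (2 * B)⁻¹).trans_le (hlow u))
  obtain ⟨Λ, hΛc, hΛ₀, hΛ⟩ := hc.exists_exp_lift hne (a₀ := 0) (e₀ := 0) (by simp [h₀])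
  refine ⟨Λ, hΛc, hΛ, fun u v => ?_⟩
  have hexp : ∀ v, ‖exp (Λ (u + v) - Λ u - Λ v) - 1‖ ≤ 4 * B ^ 2 * δ := by
    intro v
    rw [exp_sub, exp_sub, hΛ, hΛ, hΛ, div_div, div_sub_one (mul_ne_zero (hne u) (hne v)),
      norm_div, div_le_iff₀ (norm_pos_iff.2 (mul_ne_zero (hne u) (hne v)))]
    calc _ ≤ δ := hmul u v
      _ = 4 * B ^ 2 * δ * ((2 * B)⁻¹ * (2 * B)⁻¹) := by field_simp; ring
      _ ≤ 4 * B ^ 2 * δ * ‖h u * h v‖ := by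
        rw [norm_mul]; gcongr
        exacts [hlow u, hlow v]
  have := norm_le_of_forall_norm_exp_sub_one_le (ψ := fun v => Λ (u + v) - Λ u - Λ v) (x₀ := 0)
    (by fun_prop) (by simp [hΛ₀]) (by linarith) hexp v
  linarith

theorem continuous_intervalIntegral_comp_const_add {E : Type*} [NormedAddCommGroup E]
    [NormedSpace ℝ E] {f : ℝ → E} (hf : ∀ a b, IntervalIntegrable f volume a b) (a b : ℝ) :
    Continuous fun u => ∫ v in a..b, f (u + v) := by
  have hP := intervalIntegral.continuous_primitive hf 0
  convert (hP.comp (continuous_add_const b)).sub (hP.comp (continuous_add_const a)) using 1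
  ext u
  simp only [Pi.sub_apply, Function.comp_apply, intervalIntegral.integral_comp_add_left f u]
  exact (intervalIntegral.integral_interval_sub_left (hf _ _) (hf _ _)).symm

theorem exists_continuous_norm_sub_le_of_approx_mul {β : ℝ → ℂ} (hβ : Measurable β) {C ε L : ℝ}
    (hbound : ∀ u, ‖β u‖ ≤ C) (hmul : ∀ u v, ‖β (u + v) - β u * β v‖ ≤ ε) (hL : 0 < L)
    (hone : ∀ u ∈ Set.Icc 0 L, ‖β u - 1‖ ≤ ε) (hε : ε ≤ 1 / 2) :
    ∃ h : ℝ → ℂ, Continuous h ∧ h 0 = 1 ∧ ∀ u, ‖β u - h u‖ ≤ 2 * ε := by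
  have hint : ∀ u a b, IntervalIntegrable (fun v => β (u + v)) volume a b := fun u a b =>
    intervalIntegrable_const.mono_fun' (hβ.comp (measurable_const_add u)).aestronglyMeasurable
      (ae_of_all _ fun v => hbound (u + v))
  have hint₀ : IntervalIntegrable β volume 0 L := by simpa using hint 0 0 L
  set G : ℝ → ℂ := fun u => ∫ v in (0 : ℝ)..L, β (u + v) with hG
  have hG₀ : ‖G 0 - L‖ ≤ ε * L := by
    have : G 0 - L = ∫ v in (0 : ℝ)..L, (β v - 1) := by
      rw [intervalIntegral.integral_sub hint₀ intervalIntegrable_const]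
      simp [hG]
    rw [this]
    simpa [abs_of_pos hL] using intervalIntegral.norm_integral_le_of_norm_le_const (a := 0)
      (b := L) fun v hv => hone v (Set.Ioc_subset_Icc_self (by rwa [Set.uIoc_of_le hL.le] at hv))
  have hGmul : ∀ u, ‖G u - β u * G 0‖ ≤ ε * L := by
    intro u
    have : G u - β u * G 0 = ∫ v in (0 : ℝ)..L, (β (u + v) - β u * β v) := by
      rw [intervalIntegral.integral_sub (hint u 0 L) (hint₀.const_mul (β u)),
        intervalIntegral.integral_const_mul]
      simp [hG]
    rw [this]
    simpa [abs_of_pos hL] using intervalIntegral.norm_integral_le_of_norm_le_const (a := 0)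
      (b := L) fun v _ => hmul u v
  have hG₀_norm : L / 2 ≤ ‖G 0‖ := by
    have := norm_sub_norm_le (L : ℂ) (L - G 0)
    rw [sub_sub_cancel, norm_sub_rev] at this
    simp only [norm_real, Real.norm_eq_abs, abs_of_pos hL] at this
    nlinarith
  have hG₀_ne : G 0 ≠ 0 := norm_pos_iff.1 (by linarith)
  refine ⟨fun u => G u / G 0, ?_, div_self hG₀_ne, fun u => ?_⟩
  · exact (continuous_intervalIntegral_comp_const_add
      (fun a b => by simpa using hint 0 a b) 0 L).div_const _
  · have : β u - G u / G 0 = -((G u - β u * G 0) / G 0) := by field_simp; ring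
    rw [this, norm_neg, norm_div, div_le_iff₀ (by linarith)]
    calc _ ≤ ε * L := hGmul u
      _ ≤ 2 * ε * ‖G 0‖ := by nlinarith [(norm_nonneg _).trans (hone 0 ⟨le_rfl, hL.le⟩)]

theorem exists_norm_sub_exp_le_of_approx_mul {β : ℝ → ℂ} (hβ : Measurable β) {C ε L : ℝ}
    (hbound : ∀ u, ‖β u‖ ≤ C) (hmul : ∀ u v, ‖β (u + v) - β u * β v‖ ≤ ε) (hL : 0 < L)
    (hone : ∀ u ∈ Set.Icc 0 L, ‖β u - 1‖ ≤ ε) (hε : 40 * (C + 1) ^ 3 * ε ≤ 1) :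
    ∃ t : ℝ, ∀ u : ℝ, ‖β u - exp (-(I * t * u))‖ ≤ (2 + 60 * (C + 1) ^ 3) * ε := by
  have hC : 0 ≤ C := (norm_nonneg _).trans (hbound 0)
  have hε₀ : 0 ≤ ε := (norm_nonneg _).trans (hone 0 ⟨le_rfl, hL.le⟩)
  have hε' : ε ≤ 1 / 2 := by nlinarith [pow_le_pow_left₀ zero_le_one (by linarith : 1 ≤ C + 1) 3]
  obtain ⟨h, hc, h₀, hβh⟩ :=
    exists_continuous_norm_sub_le_of_approx_mul hβ hbound hmul hL hone hε'
  have hhB : ∀ u, ‖h u‖ ≤ C + 1 := fun u =>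
    (norm_le_norm_add_norm_sub (β u) (h u)).trans (by linarith [hbound u, hβh u])
  have hhmul : ∀ u v, ‖h (u + v) - h u * h v‖ ≤ 5 * (C + 1) * ε := fun u v =>
    (norm_map_add_sub_mul_le_of_norm_sub_le hbound hmul hβh u v).trans (by nlinarith)
  obtain ⟨Λ, hΛc, hΛ, hadd⟩ := exists_log_approx_add_of_approx_mul hc h₀ hhB hhmul (by nlinarith)
  have hre : ∀ u, (Λ u).re ≤ Real.log (C + 1) := fun u => by
    rw [Real.le_log_iff_exp_le (by linarith), ← norm_exp, hΛ]
    exact hhB u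
  obtain ⟨t, ht⟩ := exists_norm_exp_sub_exp_le hΛc hadd (by nlinarith) hre
  refine ⟨t, fun u => ?_⟩
  calc ‖β u - exp (-(I * t * u))‖ ≤ ‖β u - h u‖ + ‖h u - exp (-(I * t * u))‖ :=
        norm_sub_le_norm_sub_add_norm_sub _ _ _
    _ ≤ 2 * ε + 2 * (6 * (C + 1) ^ 2 * (5 * (C + 1) * ε)) :=
        add_le_add (hβh u) (by simpa only [hΛ] using ht u)
    _ = (2 + 60 * (C + 1) ^ 3) * ε := by ring

/-- Stability of Archimedean characters: a measurable approximate homomorphism on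
`(0,∞)` that is approximately `1` near `1` is uniformly close to `x ↦ x^{-it}`. -/
theorem stmt1 (C : ℝ) (hC : 0 < C) :
    ∃ ε₀ > (0:ℝ), ∃ C' > (0:ℝ), ∀ ε : ℝ, 0 < ε → ε ≤ ε₀ →
      ∀ α : ℝ → ℂ, Measurable α →
        (∀ x : ℝ, 0 < x → ‖α x‖ ≤ C) →
        (∀ x : ℝ, |x - 1| ≤ ε → ‖α x - 1‖ ≤ ε) →
        (∀ x y : ℝ, 0 < x → 0 < y → ‖α (x * y) - α x * α y‖ ≤ ε) →
        ∃ t : ℝ, ∀ x : ℝ, 0 < x →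
          ‖α x - Complex.exp (-(Complex.I * t * Real.log x))‖ ≤ C' * ε := by
  refine ⟨1 / (40 * (C + 1) ^ 3), by positivity, 2 + 60 * (C + 1) ^ 3, by positivity, ?_⟩
  intro ε hε hε₀ α hα hbound hnear hmul
  have hnear' : ∀ u ∈ Set.Icc 0 (Real.log (1 + ε)), ‖α (Real.exp u) - 1‖ ≤ ε := by
    rintro u ⟨hu₀, hu₁⟩
    refine hnear _ (abs_le.2 ⟨by linarith [Real.one_le_exp hu₀], ?_⟩)
    linarith [(Real.le_log_iff_exp_le (by linarith)).1 hu₁]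
  obtain ⟨t, ht⟩ := exists_norm_sub_exp_le_of_approx_mul (hα.comp Real.measurable_exp)
    (fun u => hbound _ (Real.exp_pos u))
    (fun u v => by
      simpa only [Function.comp_apply, Real.exp_add] using
        hmul _ _ (Real.exp_pos u) (Real.exp_pos v))
    (Real.log_pos (by linarith)) hnear' (by rwa [le_div_iff₀ (by positivity), mul_comm] at hε₀)
  exact ⟨t, fun x hx => by simpa [Real.exp_log hx] using ht (Real.log x)⟩
end

section
/- Let χ̃ : (0,∞) → S¹ be a group homomorphism from the multiplicative group of positive reals to the unit circle such that |χ̃(x) − 1| ≤ ε whenever |x − 1| ≤ ε, for some 0 < ε < 1/10. Then there exists a real number t with |t| = O(1) such that χ̃(x) = x^{it} for all x > 0. -/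
/-!
Composing with `exp` turns `χ` into an additive character `ψ s = χ (e^s)` of `ℝ` with values in
the circle. The hypothesis puts `ψ` in the arc `|arg| < π ε` near `0`; since `ψ (k s) = ψ s ^ k`
and an `n`-th root of a point of a small arc which stays in the arc for all powers `k ≤ n` lies
in the arc shrunk by `n`, `ψ` is continuous at `0`, hence continuous. A continuous character
lifts through the covering `Circle.exp : ℝ → Circle` to a continuous additive map `ℝ → ℝ`, which is
linear, so `ψ s = exp (i t s)`. Finally Jordan's inequality `‖e^{iu} - 1‖ ≥ 2|u|/π` on `[-π, π]`,
applied on `s ∈ [0, ε/2]`, gives `|t| ≤ π`.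
-/

open Real Filter Topology

namespace Circle

theorem two_div_pi_mul_abs_le_norm_exp_sub_one {x : ℝ} (hx : |x| ≤ π) :
    2 / π * |x| ≤ ‖(exp x : ℂ) - 1‖ := by
  rw [coe_exp, mul_comm (x : ℂ), Complex.norm_exp_I_mul_ofReal_sub_one, norm_mul,
    Real.norm_eq_abs, Real.norm_eq_abs, abs_two]
  have := mul_abs_le_abs_sin (x := x / 2) (by rw [abs_div, abs_two]; linarith)
  rw [abs_div, abs_two] at this
  linarith

theorem mem_centeredArc_of_norm_sub_one_lt {z : Circle} {r : ℝ} (hr : r ≤ π)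
    (hz : ‖(z : ℂ) - 1‖ < 2 / π * r) : z ∈ centeredArc r := by
  rw [mem_centeredArc hr]
  have hjordan := two_div_pi_mul_abs_le_norm_exp_sub_one (Complex.abs_arg_le_pi z)
  rw [exp_arg] at hjordan
  exact lt_of_mul_lt_mul_left (hjordan.trans_lt hz) (by positivity)

theorem mem_centeredArc_div_of_forall_pow_mem {z : Circle} {r : ℝ} (hr : r ≤ π / 2)
    {n : ℕ} (hn : 1 ≤ n) (h : ∀ k ∈ Finset.Icc 1 n, z ^ k ∈ centeredArc r) :
    z ∈ centeredArc (r / n) := by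
  induction n, hn using Nat.le_induction with
  | base => simpa using h 1 (by simp)
  | succ n hn ih =>
    have hz : z ∈ centeredArc (r / n) :=
      ih fun k hk ↦ h k (Finset.Icc_subset_Icc_right n.le_succ hk)
    have hn' : (1 : ℝ) ≤ n := by exact_mod_cast hn
    -- `r ≤ π / 2` and `n + 1 ≤ 2 n`
    have harc : r / n ≤ π / ↑(n + 1) := by
      rw [div_le_div_iff₀ (by positivity) (by positivity)]
      push_cast
      nlinarith [pi_pos]
    exact mem_centeredArc_div (by linarith [pi_pos]) (centeredArc_mono harc hz)
      (h (n + 1) (by simp))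

theorem abs_mul_le_of_forall_norm_exp_mul_sub_one_le {t δ ε : ℝ} (hδ : 0 ≤ δ) (hε : ε < 2)
    (h : ∀ s ∈ Set.Icc 0 δ, ‖(exp (t * s) : ℂ) - 1‖ ≤ ε) : |t| * δ ≤ π / 2 * ε := by
  have hπ := pi_pos
  have hε₀ : 0 ≤ ε := by simpa using h 0 ⟨le_rfl, hδ⟩
  rcases eq_or_ne t 0 with rfl | ht
  · simp only [abs_zero, zero_mul]; positivity
  have ht₀ := abs_pos.2 ht
  -- cutting `s` at `π / |t|` keeps the angle `t s` in the range of Jordan's inequality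
  set s := min δ (π / |t|) with hs_def
  have hs : s ∈ Set.Icc 0 δ := ⟨le_min hδ (by positivity), min_le_left _ _⟩
  have hts : |t * s| = |t| * s := by rw [abs_mul, abs_of_nonneg hs.1]
  have hts_le : |t| * s ≤ π :=
    (mul_le_mul_of_nonneg_left (min_le_right _ _) ht₀.le).trans_eq (mul_div_cancel₀ _ ht₀.ne')
  have key : 2 / π * (|t| * s) ≤ ε :=
    hts ▸ (two_div_pi_mul_abs_le_norm_exp_sub_one (hts ▸ hts_le)).trans (h s hs)
  rw [div_mul_eq_mul_div, div_le_iff₀ hπ] at key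
  rcases min_choice δ (π / |t|) with hδs | hπs
  · rw [hs_def, hδs] at key
    linarith
  · rw [hs_def, hπs, mul_div_cancel₀ _ ht₀.ne'] at key
    nlinarith

end Circle

namespace AddChar

theorem continuous_of_tendsto_zero {G M : Type*} [AddGroup G] [TopologicalSpace G]
    [IsTopologicalAddGroup G] [Monoid M] [TopologicalSpace M] [ContinuousMul M]
    (ψ : AddChar G M) (hψ : Tendsto ψ (𝓝 0) (𝓝 1)) : Continuous ψ := by
  refine continuous_iff_continuousAt.2 fun a ↦ ?_
  have hshift : Tendsto (fun x ↦ -a + x) (𝓝 a) (𝓝 0) := by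
    simpa using (continuous_const_add (-a)).tendsto a
  simpa [ContinuousAt, ← map_add_eq_mul] using
    (tendsto_const_nhds (x := ψ a)).mul (hψ.comp hshift)

theorem continuous_of_eventually_mem_centeredArc {G : Type*} [AddGroup G]
    [TopologicalSpace G] [IsTopologicalAddGroup G] (ψ : AddChar G Circle) {r : ℝ}
    (hr : r ≤ π / 2) (hψ : ∀ᶠ x in 𝓝 0, ψ x ∈ Circle.centeredArc r) : Continuous ψ := by
  refine ψ.continuous_of_tendsto_zero ?_
  rw [Circle.hasBasis_centeredArc_div_two_pow.tendsto_right_iff]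
  intro m _
  have hmultiples : ∀ᶠ x in 𝓝 (0 : G), ∀ k ∈ Finset.Icc 1 (2 ^ (m + 1)),
      ψ (k • x) ∈ Circle.centeredArc r :=
    (eventually_all_finset _).2 fun k _ ↦
      ((continuous_nsmul k).tendsto' 0 0 (nsmul_zero k)).eventually hψ
  filter_upwards [hmultiples] with x hx
  have hroot := Circle.mem_centeredArc_div_of_forall_pow_mem hr Nat.one_le_two_pow
    fun k hk ↦ by simpa [map_nsmul_eq_pow] using hx k hk
  refine Circle.centeredArc_mono ?_ hroot
  push_cast
  gcongr
  linarith [pi_pos]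

theorem exists_eq_circleExp_mul_of_continuous (ψ : AddChar ℝ Circle) (hψ : Continuous ψ) :
    ∃ t : ℝ, ∀ s, ψ s = Circle.exp (t * s) := by
  obtain ⟨θ, ⟨-, hθψ⟩, hθ_unique⟩ :=
    Circle.isCoveringMap_exp.existsUnique_continuousMap_lifts ⟨ψ, hψ⟩ 0 0 (by simp)
  have hθψ' (s : ℝ) : Circle.exp (θ s) = ψ s := congrFun hθψ s
  -- `θ (a + ·) - θ a` is another lift of `ψ` vanishing at `0`
  have hθ_add (a s : ℝ) : θ (a + s) = θ a + θ s := by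
    let θa : C(ℝ, ℝ) := ⟨fun s ↦ θ (a + s) - θ a, by fun_prop⟩
    have hθa : θa = θ := hθ_unique θa ⟨by simp [θa], funext fun s ↦ by
      simp [θa, Circle.exp_sub, hθψ', map_add_eq_mul]⟩
    have := congrArg (· s) hθa
    simp only [θa, ContinuousMap.coe_mk] at this
    linarith
  refine ⟨θ 1, fun s ↦ ?_⟩
  have hlinear := map_real_smul (AddMonoidHom.mk' θ hθ_add) θ.continuous s 1
  simp only [AddMonoidHom.mk'_apply, smul_eq_mul, mul_one] at hlinear
  rw [← hθψ', hlinear, mul_comm]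

section compRealExp

variable (χ : ℝ → ℂ) (hmul : ∀ x y : ℝ, 0 < x → 0 < y → χ (x * y) = χ x * χ y)
  (habs : ∀ x : ℝ, 0 < x → ‖χ x‖ = 1)

noncomputable def compRealExp : AddChar ℝ Circle where
  toFun s := ⟨χ (Real.exp s), mem_sphere_zero_iff_norm.2 (habs _ (Real.exp_pos s))⟩
  map_zero_eq_one' := by
    have hχ₁ : χ 1 ≠ 0 := norm_ne_zero_iff.1 (by simp [habs])
    ext
    simpa [hχ₁] using hmul 1 1 one_pos one_pos
  map_add_eq_mul' a b := Circle.ext <|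
    (congrArg χ (Real.exp_add a b)).trans (hmul _ _ (Real.exp_pos a) (Real.exp_pos b))

@[simp]
theorem coe_compRealExp_apply (s : ℝ) :
    (compRealExp χ hmul habs s : ℂ) = χ (Real.exp s) :=
  rfl

end compRealExp

end AddChar

/-- A homomorphism from `(0,∞)` to the unit circle which is within `ε` of `1`
on an `ε`-neighbourhood of `1` is an exact Archimedean character `x ↦ x^{it}`
with `t = O(1)`. -/
theorem stmt2 :
    ∃ K : ℝ, 0 < K ∧ ∀ (ε : ℝ) (χ : ℝ → ℂ), 0 < ε → ε < 1/10 →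
      (∀ x y : ℝ, 0 < x → 0 < y → χ (x * y) = χ x * χ y) →
      (∀ x : ℝ, 0 < x → ‖χ x‖ = 1) →
      (∀ x : ℝ, |x - 1| ≤ ε → ‖χ x - 1‖ ≤ ε) →
      ∃ t : ℝ, |t| ≤ K ∧ ∀ x : ℝ, 0 < x →
        χ x = Complex.exp (Complex.I * t * Real.log x) := by
  refine ⟨4, by norm_num, fun ε χ hε hε' hmul habs hcl ↦ ?_⟩
  have hπ := pi_pos
  set ψ := AddChar.compRealExp χ hmul habs
  have hψ_near (s : ℝ) (hs : |s| ≤ ε / 2) : ‖(ψ s : ℂ) - 1‖ ≤ ε :=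
    hcl _ <| (abs_exp_sub_one_le (by linarith)).trans (by linarith)
  have hψ_arc : ∀ᶠ s in 𝓝 0, ψ s ∈ Circle.centeredArc (π * ε) := by
    filter_upwards [Metric.closedBall_mem_nhds (0 : ℝ) (by positivity : 0 < ε / 2)] with s hs
    rw [mem_closedBall_zero_iff, norm_eq_abs] at hs
    refine Circle.mem_centeredArc_of_norm_sub_one_lt (by nlinarith) ?_
    calc ‖(ψ s : ℂ) - 1‖ ≤ ε := hψ_near s hs
      _ < 2 / π * (π * ε) := by field_simp; linarith
  obtain ⟨t, ht⟩ := ψ.exists_eq_circleExp_mul_of_continuous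
    (ψ.continuous_of_eventually_mem_centeredArc (by nlinarith) hψ_arc)
  refine ⟨t, ?_, fun x hx ↦ ?_⟩
  · have := Circle.abs_mul_le_of_forall_norm_exp_mul_sub_one_le (by positivity) (by linarith)
      fun s hs ↦ ht s ▸ hψ_near s (abs_le.2 ⟨by linarith [hs.1], hs.2⟩)
    nlinarith [pi_le_four]
  · calc χ x = ψ (Real.log x) := by simp [ψ, Real.exp_log hx]
      _ = Complex.exp (Complex.I * t * Real.log x) := by
        rw [ht, Circle.coe_exp]
        push_cast
        ring_nf
end

section
/- Let g₁, …, g_k : ℕ → ℂ be functions bounded in absolute value by 1 (extended by g_j(n) = 0 for n ≤ 0), let h₁, …, h_k be integers, let a be an integer, and for each real d > 0 and real X ≥ 1 define S_d(X) := (1/⌊X/d⌋) Σ_{n ≤ X/d} g₁(n + a h₁) ⋯ g_k(n + a h_k) (for X/d ≥ 1). Then for any reals d₁, d₂ > 0 one has limsup_{X → ∞} |S_{d₁}(X) − S_{d₂}(X)| ≤ 2|log d₁ − log d₂|. -/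
/-!
Both averages are Cesàro means of the same 1-bounded sequence, over `[1, N₁]` and `[1, N₂]` with
`Nᵢ = ⌊X / dᵢ⌋`. For `N₁ ≤ N₂` they differ by at most `2 (1 - N₁ / N₂)`: rescaling the common
part costs `1 - N₁ / N₂`, and the `N₂ - N₁` extra terms cost as much again. As `X → ∞` the ratio
`N₁ / N₂` tends to `d₂ / d₁`, and `1 - d₂ / d₁ ≤ log d₁ - log d₂`.
-/

open Filter Topology Finset

theorem tendsto_natFloor_div_natFloor_div {d₁ d₂ : ℝ} (hd₁ : 0 < d₁) (hd₂ : 0 < d₂) :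
    Tendsto (fun X : ℝ => (⌊X / d₁⌋₊ : ℝ) / ⌊X / d₂⌋₊) atTop (𝓝 (d₂ / d₁)) := by
  have hfloor {d : ℝ} (hd : 0 < d) : Tendsto (fun X : ℝ => (⌊X / d⌋₊ : ℝ) / X) atTop (𝓝 d⁻¹) := by
    simpa only [← div_eq_inv_mul] using tendsto_nat_floor_mul_div_atTop (inv_nonneg.2 hd.le)
  rw [← inv_div_inv]
  refine ((hfloor hd₁).div (hfloor hd₂) (inv_ne_zero hd₂.ne')).congr' ?_
  filter_upwards [eventually_ne_atTop 0] with X hX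
  exact div_div_div_cancel_right₀ hX _ _

noncomputable def cesaroAvg {𝕜 : Type*} [RCLike 𝕜] (c : ℕ → 𝕜) (N : ℕ) : 𝕜 :=
  (N : 𝕜)⁻¹ * ∑ n ∈ Icc 1 N, c n

section CesaroAvg

variable {𝕜 : Type*} [RCLike 𝕜]

theorem one_div_intFloor_mul_sum_eq_cesaroAvg (c : ℕ → 𝕜) (x : ℝ) :
    1 / ((⌊x⌋ : ℤ) : 𝕜) * ∑ n ∈ Icc 1 ⌊x⌋.toNat, c n = cesaroAvg c ⌊x⌋₊ := by
  rw [Int.floor_toNat, cesaroAvg, one_div]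
  rcases le_or_gt 0 x with hx | hx
  · rw [← Int.natCast_floor_eq_floor hx, Int.cast_natCast]
  · simp [Nat.floor_eq_zero.2 (hx.trans zero_lt_one)]

theorem norm_sum_Ioc_le_of_norm_le_one {c : ℕ → 𝕜} (hc : ∀ n, ‖c n‖ ≤ 1) {m N : ℕ}
    (hmN : m ≤ N) :
    ‖∑ n ∈ Ioc m N, c n‖ ≤ (N : ℝ) - m := by
  calc ‖∑ n ∈ Ioc m N, c n‖ ≤ ∑ _n ∈ Ioc m N, (1 : ℝ) := norm_sum_le_of_le _ fun n _ => hc n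
    _ = (N : ℝ) - m := by simp [Nat.cast_sub hmN]

theorem norm_cesaroAvg_sub_cesaroAvg_le {c : ℕ → 𝕜} (hc : ∀ n, ‖c n‖ ≤ 1) {N₁ N₂ : ℕ}
    (hN₁ : 0 < N₁) (h12 : N₁ ≤ N₂) :
    ‖cesaroAvg c N₁ - cesaroAvg c N₂‖ ≤ 2 * (1 - (N₁ : ℝ) / N₂) := by
  have hN₁' : (0 : ℝ) < N₁ := by exact_mod_cast hN₁
  have h12' : (N₁ : ℝ) ≤ N₂ := by exact_mod_cast h12
  have hN₂' : (0 : ℝ) < N₂ := hN₁'.trans_le h12'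
  set A := ∑ n ∈ Ioc 0 N₁, c n
  set B := ∑ n ∈ Ioc N₁ N₂, c n
  have hsplit : cesaroAvg c N₁ - cesaroAvg c N₂
      = (((N₁ : ℝ)⁻¹ - (N₂ : ℝ)⁻¹ : ℝ) : 𝕜) * A - (N₂ : 𝕜)⁻¹ * B := by
    have hIcc (N : ℕ) : Icc 1 N = Ioc 0 N := Icc_add_one_left_eq_Ioc 0 N
    simp only [cesaroAvg, hIcc, ← sum_Ioc_consecutive _ (Nat.zero_le N₁) h12]
    push_cast
    ring
  have hinv : (N₂ : ℝ)⁻¹ ≤ (N₁ : ℝ)⁻¹ := inv_anti₀ hN₁' h12'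
  calc ‖cesaroAvg c N₁ - cesaroAvg c N₂‖
      ≤ ((N₁ : ℝ)⁻¹ - (N₂ : ℝ)⁻¹) * N₁ + (N₂ : ℝ)⁻¹ * (N₂ - N₁) := by
        rw [hsplit]
        refine (norm_sub_le _ _).trans (add_le_add ?_ ?_)
        · rw [norm_mul, RCLike.norm_ofReal, abs_of_nonneg (sub_nonneg.2 hinv)]
          exact mul_le_mul_of_nonneg_left
            ((norm_sum_Ioc_le_of_norm_le_one hc (Nat.zero_le N₁)).trans_eq (by simp))
            (sub_nonneg.2 hinv)
        · rw [norm_mul, norm_inv, RCLike.norm_natCast]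
          exact mul_le_mul_of_nonneg_left (norm_sum_Ioc_le_of_norm_le_one hc h12)
            (by positivity)
    _ = 2 * (1 - (N₁ : ℝ) / N₂) := by field_simp; ring

theorem limsup_norm_cesaroAvg_floor_sub_le {c : ℕ → 𝕜}
    (hc : ∀ n, ‖c n‖ ≤ 1) {d₁ d₂ : ℝ} (hd₂ : 0 < d₂) (h21 : d₂ ≤ d₁) :
    limsup (fun X : ℝ => ‖cesaroAvg c ⌊X / d₁⌋₊ - cesaroAvg c ⌊X / d₂⌋₊‖) atTop
      ≤ 2 * (Real.log d₁ - Real.log d₂) := by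
  have hd₁ : 0 < d₁ := hd₂.trans_le h21
  have hbound : ∀ᶠ X in atTop, ‖cesaroAvg c ⌊X / d₁⌋₊ - cesaroAvg c ⌊X / d₂⌋₊‖
      ≤ 2 * (1 - (⌊X / d₁⌋₊ : ℝ) / ⌊X / d₂⌋₊) := by
    have hpos : ∀ᶠ X in atTop, 1 ≤ ⌊X / d₁⌋₊ :=
      (tendsto_nat_floor_atTop.comp (tendsto_id.atTop_div_const hd₁)).eventually_ge_atTop 1
    filter_upwards [hpos, eventually_ge_atTop 0] with X hN₁ hX
    exact norm_cesaroAvg_sub_cesaroAvg_le hc hN₁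
      (Nat.floor_le_floor (div_le_div_of_nonneg_left hX hd₂ h21))
  have hlim := ((tendsto_natFloor_div_natFloor_div hd₁ hd₂).const_sub 1).const_mul 2
  have hlog : 1 - d₂ / d₁ ≤ Real.log d₁ - Real.log d₂ := by
    simpa only [inv_div, Real.log_div hd₁.ne' hd₂.ne'] using
      Real.one_sub_inv_le_log_of_pos (div_pos hd₁ hd₂)
  calc limsup (fun X : ℝ => ‖cesaroAvg c ⌊X / d₁⌋₊ - cesaroAvg c ⌊X / d₂⌋₊‖) atTop
      ≤ 2 * (1 - d₂ / d₁) :=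
        (limsup_le_limsup hbound (isCoboundedUnder_le_of_le atTop fun _ => norm_nonneg _)
          hlim.isBoundedUnder_le).trans_eq hlim.limsup_eq
    _ ≤ 2 * (Real.log d₁ - Real.log d₂) := by linarith

end CesaroAvg

theorem stmt4_general (k : ℕ) (g : Fin k → ℤ → ℂ) (h : Fin k → ℤ) (a : ℤ)
    (hbd : ∀ j n, ‖g j n‖ ≤ 1)
    (S : ℝ → ℝ → ℂ)
    (hS : ∀ d X : ℝ, S d X =
      (1 / ((⌊X / d⌋ : ℤ) : ℂ)) *
        ∑ n ∈ Finset.Icc 1 (⌊X / d⌋.toNat), ∏ j, g j ((n : ℤ) + a * h j))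
    (d₁ d₂ : ℝ) (hd₁ : 0 < d₁) (hd₂ : 0 < d₂) :
    Filter.limsup (fun X : ℝ => ‖S d₁ X - S d₂ X‖) Filter.atTop
      ≤ 2 * |Real.log d₁ - Real.log d₂| := by
  set c : ℕ → ℂ := fun n => ∏ j, g j ((n : ℤ) + a * h j)
  have hc : ∀ n, ‖c n‖ ≤ 1 := fun n => by
    rw [norm_prod]
    exact prod_le_one (fun j _ => norm_nonneg _) (fun j _ => hbd j _)
  have hS' : ∀ d X, S d X = cesaroAvg c ⌊X / d⌋₊ := fun d X => by
    rw [hS, one_div_intFloor_mul_sum_eq_cesaroAvg]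
  simp only [hS']
  rcases le_total d₂ d₁ with h21 | h12
  · rw [abs_of_nonneg (sub_nonneg.2 (Real.log_le_log hd₂ h21))]
    exact limsup_norm_cesaroAvg_floor_sub_le hc hd₂ h21
  · rw [abs_sub_comm, abs_of_nonneg (sub_nonneg.2 (Real.log_le_log hd₁ h12))]
    convert limsup_norm_cesaroAvg_floor_sub_le hc hd₁ h12 using 3 with X
    exact norm_sub_rev _ _

/-- Log-Lipschitz estimate for the correlation averages: changing the scale
parameter `d` changes the unweighted correlation average by at most twice the
logarithmic distance between the scales, in the limit `X → ∞`. -/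
theorem stmt4 (k : ℕ) (g : Fin k → ℤ → ℂ) (h : Fin k → ℤ) (a : ℤ)
    (hbd : ∀ j n, ‖g j n‖ ≤ 1)
    (hzero : ∀ j (n : ℤ), n ≤ 0 → g j n = 0)
    (S : ℝ → ℝ → ℂ)
    (hS : ∀ d X : ℝ, S d X =
      (1 / ((⌊X / d⌋ : ℤ) : ℂ)) *
        ∑ n ∈ Finset.Icc 1 (⌊X / d⌋.toNat), ∏ j, g j ((n : ℤ) + a * h j))
    (d₁ d₂ : ℝ) (hd₁ : 0 < d₁) (hd₂ : 0 < d₂) :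
    Filter.limsup (fun X : ℝ => ‖S d₁ X - S d₂ X‖) Filter.atTop
      ≤ 2 * |Real.log d₁ - Real.log d₂| :=
  stmt4_general k g h a hbd S hS d₁ d₂ hd₁ hd₂
end

section
/- Let a : ℝ → [0,1] be a measurable function, and define the one-sided Hardy–Littlewood maximal function Ma(s) := sup_{r > 0} (1/r) ∫_{s−r}^{s} a(s′) ds′. Then for any λ > 0, the Lebesgue measure of the set {s ∈ ℝ : Ma(s) ≥ λ} is at most (1/λ) ∫_ℝ a(s) ds. -/
/-!
With `H x = l * x - ∫ t in Iic x, f t`, the average of `f` over `(s - r, s]` exceeds `l` exactly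
when `H s < H (s - r)`. So `{l < M f}` lies in the set of points that have a higher point of `H`
to their left (the shadow when the sun rises on the left). That set is open, and because `H`
tends to `∓∞` at `∓∞` its components are bounded intervals `(a, b)`. On each of them Riesz's
rising sun lemma gives `H b ≤ H a`, that is `l * (b - a) ≤ ∫ t in Ioc a b, f t`. Summing over the
disjoint components bounds `l * |{l < M f}|` by `∫ f`, and letting `l` increase to `λ` gives the
claim.
-/

open MeasureTheory Set Filter Topology TopologicalSpace
open scoped ENNReal

section ConnectedComponents

variable {X : Type*} [TopologicalSpace X]

theorem pairwiseDisjoint_connectedComponentIn (U : Set X) :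
    (connectedComponentIn U '' U).PairwiseDisjoint id := by
  rintro _ ⟨x, -, rfl⟩ _ ⟨y, -, rfl⟩ hne
  exact Set.disjoint_left.2 fun z hx hy =>
    hne ((connectedComponentIn_eq hx).trans (connectedComponentIn_eq hy).symm)

theorem biUnion_connectedComponentIn (U : Set X) : ⋃ C ∈ connectedComponentIn U '' U, C = U := by
  rw [biUnion_image]
  exact subset_antisymm (iUnion₂_subset fun x _ => connectedComponentIn_subset U x)
    fun x hx => mem_biUnion hx (mem_connectedComponentIn hx)

variable [LocallyConnectedSpace X] {U : Set X}

theorem IsOpen.countable_connectedComponentIn [SeparableSpace X] (hU : IsOpen U) :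
    (connectedComponentIn U '' U).Countable := by
  refine (pairwiseDisjoint_connectedComponentIn U).countable_of_isOpen ?_ ?_
  · rintro _ ⟨x, -, rfl⟩
    exact hU.connectedComponentIn
  · rintro _ ⟨x, hx, rfl⟩
    exact ⟨x, mem_connectedComponentIn hx⟩

theorem IsOpen.mul_measure_le_setLIntegral_of_connectedComponentIn [SeparableSpace X]
    [MeasurableSpace X] [OpensMeasurableSpace X] {μ : Measure X} {g : X → ℝ≥0∞} {c : ℝ≥0∞}
    (hU : IsOpen U)
    (h : ∀ x ∈ U, c * μ (connectedComponentIn U x) ≤ ∫⁻ y in connectedComponentIn U x, g y ∂μ) :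
    c * μ U ≤ ∫⁻ y in U, g y ∂μ := by
  have hc := hU.countable_connectedComponentIn
  have hd := pairwiseDisjoint_connectedComponentIn U
  have hm : ∀ C ∈ connectedComponentIn U '' U, MeasurableSet C := by
    rintro _ ⟨x, -, rfl⟩
    exact hU.connectedComponentIn.measurableSet
  calc c * μ U = ∑' C : connectedComponentIn U '' U, c * μ C := by
        conv_lhs => rw [← biUnion_connectedComponentIn U]
        rw [measure_biUnion (f := fun C => C) hc hd hm, ENNReal.tsum_mul_left]
    _ ≤ ∑' C : connectedComponentIn U '' U, ∫⁻ y in C, g y ∂μ := by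
        exact ENNReal.tsum_le_tsum fun ⟨_, x, hx, rfl⟩ => h x hx
    _ = ∫⁻ y in U, g y ∂μ := by
        conv_rhs => rw [← biUnion_connectedComponentIn U]
        rw [lintegral_biUnion (s := fun C => C) hc hm hd]

end ConnectedComponents

theorem Real.connectedComponentIn_eq_Ioo {U : Set ℝ} (hU : IsOpen U) {s c₁ c₂ : ℝ} (hs : s ∈ U)
    (hc₁ : c₁ < s) (hc₁U : c₁ ∉ U) (hc₂ : s < c₂) (hc₂U : c₂ ∉ U) :
    ∃ a b, a ∉ U ∧ b ∉ U ∧ connectedComponentIn U s = Ioo a b := by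
  set a := sSup (Iic s ∩ Uᶜ)
  set b := sInf (Ici s ∩ Uᶜ)
  have hbdd₁ : BddAbove (Iic s ∩ Uᶜ) := ⟨s, fun _ h => h.1⟩
  have hbdd₂ : BddBelow (Ici s ∩ Uᶜ) := ⟨s, fun _ h => h.1⟩
  have ha : a ∈ Iic s ∩ Uᶜ :=
    (isClosed_Iic.inter hU.isClosed_compl).csSup_mem ⟨c₁, hc₁.le, hc₁U⟩ hbdd₁
  have hb : b ∈ Ici s ∩ Uᶜ :=
    (isClosed_Ici.inter hU.isClosed_compl).csInf_mem ⟨c₂, hc₂.le, hc₂U⟩ hbdd₂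
  have hIoo : Ioo a b ⊆ U := fun x hx => by
    by_contra hxU
    rcases le_total x s with hxs | hsx
    · exact hx.1.not_ge (le_csSup hbdd₁ ⟨hxs, hxU⟩)
    · exact hx.2.not_ge (csInf_le hbdd₂ ⟨hsx, hxU⟩)
  have hsab : s ∈ Ioo a b :=
    ⟨ha.1.lt_of_ne fun h => ha.2 (h ▸ hs), hb.1.lt_of_ne' fun h => hb.2 (h ▸ hs)⟩
  refine ⟨a, b, ha.2, hb.2, subset_antisymm (fun x hx => ?_)
    (isPreconnected_Ioo.subset_connectedComponentIn hsab hIoo)⟩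
  have hC := isPreconnected_connectedComponentIn (x := s) (F := U)
  have hsC := mem_connectedComponentIn hs
  have hCU := connectedComponentIn_subset U s
  constructor
  · by_contra! hxa
    exact ha.2 (hCU (hC.Icc_subset hx hsC ⟨hxa, ha.1⟩))
  · by_contra! hbx
    exact hb.2 (hCU (hC.Icc_subset hsC hx ⟨hb.1, hbx⟩))

def leftShadow (H : ℝ → ℝ) : Set ℝ := {s | ∃ y < s, H s < H y}

section LeftShadow

variable {H : ℝ → ℝ}

theorem isOpen_leftShadow (hH : Continuous H) : IsOpen (leftShadow H) := by
  have : leftShadow H = ⋃ y, Ioi y ∩ H ⁻¹' Iio (H y) := by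
    ext s
    simp [leftShadow]
  rw [this]
  exact isOpen_iUnion fun y => isOpen_Ioi.inter (isOpen_Iio.preimage hH)

theorem notMem_leftShadow_of_isMaxOn {c : ℝ} (hc : IsMaxOn H (Iic c) c) : c ∉ leftShadow H :=
  fun ⟨_, hyc, hy⟩ => hy.not_ge (hc hyc.le)

theorem Continuous.exists_isMaxOn_Iic (hH : Continuous H) (hbot : Tendsto H atBot atBot)
    (T : ℝ) : ∃ c ≤ T, IsMaxOn H (Iic T) c := by
  have hev : ∀ᶠ x in cocompact ℝ, H (min x T) ≤ H (min T T) := by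
    rw [cocompact_eq_atBot_atTop]
    refine eventually_sup.2 ⟨?_, ?_⟩
    · filter_upwards [hbot.eventually_le_atBot (H T), eventually_le_atBot T] with x hx hxT
      rwa [min_eq_left hxT, min_self]
    · filter_upwards [eventually_ge_atTop T] with x hxT
      rw [min_eq_right hxT, min_self]
  obtain ⟨x, hx⟩ := (hH.comp (continuous_id.min continuous_const)).exists_forall_ge' T hev
  refine ⟨min x T, min_le_right x T, fun y (hy : y ≤ T) => ?_⟩
  simpa [min_eq_left hy] using hx y

theorem exists_lt_notMem_leftShadow (hH : Continuous H) (hbot : Tendsto H atBot atBot) (s : ℝ) :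
    ∃ c < s, c ∉ leftShadow H := by
  obtain ⟨c, hc, hmax⟩ := hH.exists_isMaxOn_Iic hbot (s - 1)
  exact ⟨c, by linarith, notMem_leftShadow_of_isMaxOn (hmax.on_subset (Iic_subset_Iic.2 hc))⟩

theorem exists_gt_notMem_leftShadow (hH : Continuous H) (hbot : Tendsto H atBot atBot)
    (htop : Tendsto H atTop atTop) (s : ℝ) : ∃ c > s, c ∉ leftShadow H := by
  obtain ⟨c₀, -, hc₀⟩ := hH.exists_isMaxOn_Iic hbot s
  obtain ⟨T, hT, -⟩ := ((htop.eventually_gt_atTop (H c₀)).and (eventually_gt_atTop s)).exists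
  obtain ⟨c, hcT, hc⟩ := hH.exists_isMaxOn_Iic hbot T
  refine ⟨c, lt_of_not_ge fun hcs => ?_,
    notMem_leftShadow_of_isMaxOn (hc.on_subset (Iic_subset_Iic.2 hcT))⟩
  exact (hT.trans_le (hc (le_refl T))).not_ge (hc₀ hcs)

/-- **Riesz's rising sun lemma**, for a bounded component `(a, b)` of the shadow. -/
theorem le_of_Ioo_subset_leftShadow (hH : Continuous H) {a b : ℝ} (hab : a < b)
    (ha : a ∉ leftShadow H) (hsub : Ioo a b ⊆ leftShadow H) : H b ≤ H a := by
  have hle : ∀ x ∈ Ioo a b, H x ≤ H a := by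
    intro x hx
    obtain ⟨c, hc, hcmax⟩ := isCompact_Icc.exists_isMaxOn (nonempty_Icc.2 hx.1.le) hH.continuousOn
    refine (hcmax (right_mem_Icc.2 hx.1.le)).trans ?_
    by_contra! hac
    obtain ⟨y, hyc, hy⟩ :=
      hsub ⟨hc.1.lt_of_ne (by rintro rfl; exact hac.false), hc.2.trans_lt hx.2⟩
    rcases le_or_gt a y with hay | hya
    · exact hy.not_ge (hcmax ⟨hay, hyc.le.trans hc.2⟩)
    · exact ha ⟨y, hya, hac.trans hy⟩
  have hclosed : IsClosed {x | H x ≤ H a} := isClosed_le hH continuous_const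
  exact hclosed.closure_subset_iff.2 hle (closure_Ioo hab.ne ▸ right_mem_Icc.2 hab.le)

end LeftShadow

noncomputable def oneSidedMaximal (f : ℝ → ℝ) (s : ℝ) : ℝ :=
  ⨆ r > (0 : ℝ), (1 / r) * ∫ t in Ioc (s - r) s, f t

noncomputable def slopeSubPrimitive (f : ℝ → ℝ) (l x : ℝ) : ℝ := l * x - ∫ t in Iic x, f t

section Maximal

variable {f : ℝ → ℝ} {l : ℝ}

theorem exists_lt_average_of_lt_oneSidedMaximal {s : ℝ} (hl : 0 ≤ l)
    (h : l < oneSidedMaximal f s) : ∃ r > 0, l < (1 / r) * ∫ t in Ioc (s - r) s, f t := by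
  obtain ⟨r, hr⟩ := exists_lt_of_lt_ciSup h
  by_cases hr0 : 0 < r
  · exact ⟨r, hr0, by rwa [ciSup_pos hr0] at hr⟩
  · rw [ciSup_neg hr0, Real.sSup_empty] at hr
    exact absurd hr hl.not_gt

theorem slopeSubPrimitive_sub (hf : Integrable f) {x y : ℝ} (hxy : x ≤ y) :
    slopeSubPrimitive f l y - slopeSubPrimitive f l x = l * (y - x) - ∫ t in Ioc x y, f t := by
  have := intervalIntegral.integral_Iic_sub_Iic hf.integrableOn hf.integrableOn (a := x) (b := y)
  rw [intervalIntegral.integral_of_le hxy] at this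
  simp only [slopeSubPrimitive]
  linarith

theorem continuous_slopeSubPrimitive (hf : Integrable f) : Continuous (slopeSubPrimitive f l) := by
  have : slopeSubPrimitive f l = fun x => l * x - ((∫ t in Iic 0, f t) + ∫ t in (0)..x, f t) := by
    ext x
    rw [← intervalIntegral.integral_Iic_sub_Iic hf.integrableOn hf.integrableOn, add_sub_cancel]
    rfl
  rw [this]
  exact (continuous_const.mul continuous_id).sub (continuous_const.add (hf.continuous_primitive 0))

theorem tendsto_slopeSubPrimitive_atBot (hf0 : 0 ≤ f) (hl : 0 < l) :
    Tendsto (slopeSubPrimitive f l) atBot atBot := by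
  refine tendsto_atBot_mono (fun x => ?_) (tendsto_id.const_mul_atBot hl)
  have : 0 ≤ ∫ t in Iic x, f t := setIntegral_nonneg measurableSet_Iic fun t _ => hf0 t
  simp only [slopeSubPrimitive, id]
  linarith

theorem tendsto_slopeSubPrimitive_atTop (hf : Integrable f) (hf0 : 0 ≤ f) (hl : 0 < l) :
    Tendsto (slopeSubPrimitive f l) atTop atTop := by
  refine tendsto_atTop_mono (fun x => ?_)
    (tendsto_atTop_add_const_right _ (-∫ t, f t) (tendsto_id.const_mul_atTop hl))
  have : ∫ t in Iic x, f t ≤ ∫ t, f t := setIntegral_le_integral hf (ae_of_all _ hf0)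
  simp only [slopeSubPrimitive, id]
  linarith

theorem setOf_lt_oneSidedMaximal_subset_leftShadow (hf : Integrable f) (hl : 0 ≤ l) :
    {s | l < oneSidedMaximal f s} ⊆ leftShadow (slopeSubPrimitive f l) := by
  intro s hs
  obtain ⟨r, hr, hlr⟩ := exists_lt_average_of_lt_oneSidedMaximal hl hs
  refine ⟨s - r, by linarith, ?_⟩
  have hsub := slopeSubPrimitive_sub (l := l) hf (sub_le_self s hr.le)
  rw [sub_sub_cancel] at hsub
  rw [one_div_mul_eq_div, lt_div_iff₀ hr] at hlr
  linarith

theorem ofReal_mul_volume_leftShadow_le (hf : Integrable f) (hf0 : 0 ≤ f) (hl : 0 < l) :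
    ENNReal.ofReal l * volume (leftShadow (slopeSubPrimitive f l)) ≤
      ENNReal.ofReal (∫ t, f t) := by
  have hH := continuous_slopeSubPrimitive (l := l) hf
  have hU := isOpen_leftShadow hH
  rw [ofReal_integral_eq_lintegral_ofReal hf (ae_of_all _ hf0)]
  refine (hU.mul_measure_le_setLIntegral_of_connectedComponentIn fun s hs => ?_).trans
    (setLIntegral_le_lintegral _ _)
  obtain ⟨c₁, hc₁, hc₁U⟩ :=
    exists_lt_notMem_leftShadow hH (tendsto_slopeSubPrimitive_atBot hf0 hl) s
  obtain ⟨c₂, hc₂, hc₂U⟩ := exists_gt_notMem_leftShadow hH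
    (tendsto_slopeSubPrimitive_atBot hf0 hl) (tendsto_slopeSubPrimitive_atTop hf hf0 hl) s
  obtain ⟨a, b, ha, hb, hC⟩ := Real.connectedComponentIn_eq_Ioo hU hs hc₁ hc₁U hc₂ hc₂U
  have hsC := mem_connectedComponentIn hs
  rw [hC] at hsC
  have hab : a < b := hsC.1.trans hsC.2
  have hsun := le_of_Ioo_subset_leftShadow hH hab ha (hC ▸ connectedComponentIn_subset _ _)
  have hgap := slopeSubPrimitive_sub (l := l) hf hab.le
  rw [hC, Real.volume_Ioo, ← ENNReal.ofReal_mul hl.le,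
    ← ofReal_integral_eq_lintegral_ofReal hf.integrableOn (ae_of_all _ hf0),
    ← integral_Ioc_eq_integral_Ioo]
  exact ENNReal.ofReal_le_ofReal (by linarith)

theorem volume_setOf_lt_oneSidedMaximal_le (hf : Integrable f) (hf0 : 0 ≤ f) (hl : 0 < l) :
    volume {s | l < oneSidedMaximal f s} ≤ ENNReal.ofReal ((1 / l) * ∫ t, f t) := by
  refine (measure_mono (setOf_lt_oneSidedMaximal_subset_leftShadow hf hl.le)).trans ?_
  rw [one_div_mul_eq_div, ENNReal.ofReal_div_of_pos hl, ENNReal.le_div_iff_mul_le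
    (.inl (ENNReal.ofReal_pos.2 hl).ne') (.inl ENNReal.ofReal_ne_top), mul_comm]
  exact ofReal_mul_volume_leftShadow_le hf hf0 hl

end Maximal

theorem stmt6_general (a : ℝ → ℝ)
    (h0 : ∀ s, 0 ≤ a s) (hint : Integrable a)
    (lam : ℝ) (hlam : 0 < lam) :
    volume {s : ℝ | lam ≤ ⨆ r > (0:ℝ), (1 / r) * ∫ t in Set.Ioc (s - r) s, a t}
      ≤ ENNReal.ofReal ((1 / lam) * ∫ t, a t) := by
  have hbound : ∀ l ∈ Ioo 0 lam, volume {s | lam ≤ oneSidedMaximal a s} ≤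
      ENNReal.ofReal ((1 / l) * ∫ t, a t) := fun l hl =>
    (measure_mono fun s hs => hl.2.trans_le hs).trans
      (volume_setOf_lt_oneSidedMaximal_le hint h0 hl.1)
  have hcont : ContinuousWithinAt (fun l => ENNReal.ofReal ((1 / l) * ∫ t, a t)) (Iio lam) lam :=
    (ENNReal.continuous_ofReal.continuousAt.comp
      ((continuousAt_const.div continuousAt_id hlam.ne').mul continuousAt_const)).continuousWithinAt
  exact ge_of_tendsto hcont (eventually_of_mem (Ioo_mem_nhdsLT hlam) hbound)

/-- One-sided Hardy--Littlewood maximal inequality with constant 1. -/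
theorem stmt6 (a : ℝ → ℝ) (hmeas : Measurable a)
    (h0 : ∀ s, 0 ≤ a s) (h1 : ∀ s, a s ≤ 1) (hint : Integrable a)
    (lam : ℝ) (hlam : 0 < lam) :
    volume {s : ℝ | lam ≤ ⨆ r > (0:ℝ), (1 / r) * ∫ t in Set.Ioc (s - r) s, a t}
      ≤ ENNReal.ofReal ((1 / lam) * ∫ t, a t) :=
  stmt6_general a h0 hint lam hlam
end

section
/- Let a : ℝ → [0,1] be measurable, supported in an interval of length L, and suppose s₀ ∈ ℝ satisfies ∫_{s₀−r}^{s₀} a(t) dt ≤ c·r for all r > 0, where 0 < c < 1. Then for any 3 ≤ D one has ∫_{s₀ − log D}^{s₀ − log log D} a(s)/(s₀ − s) ds ≤ c·(log log D − log log log D + 1). -/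
/-! With x = s₀ - s ∈ [B, A), where A = log D and B = log log D, write
1/x = ∫_x^A dt/t² + 1/A. By Fubini the integral of a(s)/(s₀ - s) becomes
∫_B^A t⁻² (∫_{s₀-t}^{s₀-B} a) dt + A⁻¹ ∫_{s₀-A}^{s₀-B} a, and the density bound
∫_{s₀-r}^{s₀} a ≤ c r controls the two pieces by c (log A - log B) and c. -/

open MeasureTheory Set Real

theorem integral_Ioc_inv_sq {x A : ℝ} (hx : 0 < x) (hxA : x ≤ A) :
    ∫ t in Ioc x A, (t ^ 2)⁻¹ = x⁻¹ - A⁻¹ := by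
  have hpos : ∀ t ∈ uIcc x A, t ≠ 0 := fun t ht => by
    rw [uIcc_of_le hxA] at ht; exact (hx.trans_le ht.1).ne'
  rw [← intervalIntegral.integral_of_le hxA,
    intervalIntegral.integral_eq_sub_of_hasDerivAt (f := fun t => -t⁻¹)
      (fun t ht => by simpa using (hasDerivAt_inv (hpos t ht)).fun_neg)
      (ContinuousOn.intervalIntegrable (u := fun t : ℝ => (t ^ 2)⁻¹)
        ((continuous_pow 2).continuousOn.inv₀ fun t ht => pow_ne_zero 2 (hpos t ht)))]
  ring

theorem integral_Ioc_inv {B A : ℝ} (hB : 0 < B) (hBA : B ≤ A) :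
    ∫ t in Ioc B A, t⁻¹ = log A - log B := by
  rw [← intervalIntegral.integral_of_le hBA, integral_inv_of_pos hB (hB.trans_le hBA),
    log_div (hB.trans_le hBA).ne' hB.ne']

theorem setIntegral_div_sub_eq {f : ℝ → ℝ} {s₀ A B : ℝ} (hB : 0 < B)
    (hf : IntegrableOn f (Ioc (s₀ - A) (s₀ - B))) :
    ∫ s in Ioc (s₀ - A) (s₀ - B), f s / (s₀ - s) =
      (∫ t in Ioc B A, (∫ s in Ioc (s₀ - A) (s₀ - B) ∩ Ioi (s₀ - t), f s) / t ^ 2) +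
        (∫ s in Ioc (s₀ - A) (s₀ - B), f s) / A := by
  set I := Ioc (s₀ - A) (s₀ - B)
  set J := Ioc B A
  set K : ℝ × ℝ → ℝ := {p | s₀ - p.1 < p.2}.indicator fun p => f p.1 / p.2 ^ 2
  have hJ : IntegrableOn (fun t : ℝ => (t ^ 2)⁻¹) J := by
    refine (ContinuousOn.integrableOn_Icc (f := fun t : ℝ => (t ^ 2)⁻¹) ?_).mono_set
      Ioc_subset_Icc_self
    exact (continuous_pow 2).continuousOn.inv₀ fun t ht => pow_ne_zero 2 (hB.trans_le ht.1).ne'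
  have hK : Integrable K ((volume.restrict I).prod (volume.restrict J)) := by
    refine Integrable.indicator ?_ (measurableSet_lt (by fun_prop) (by fun_prop))
    simpa only [div_eq_mul_inv] using hf.mul_prod hJ
  have hslice_t : ∀ s ∈ I, ∫ t in J, K (s, t) = f s * ((s₀ - s)⁻¹ - A⁻¹) := by
    intro s hs
    have hK_s : (fun t => K (s, t)) = (Ioi (s₀ - s)).indicator fun t => f s * (t ^ 2)⁻¹ := by
      ext t; simp [K, indicator_apply, div_eq_mul_inv]
    rw [hK_s, setIntegral_indicator measurableSet_Ioi, Ioc_inter_Ioi,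
      max_eq_right (by linarith [hs.2]), integral_const_mul,
      integral_Ioc_inv_sq (by linarith [hs.2]) (by linarith [hs.1])]
  have hslice_s : ∀ t, ∫ s in I, K (s, t) = (∫ s in I ∩ Ioi (s₀ - t), f s) / t ^ 2 := by
    intro t
    have hK_t : (fun s => K (s, t)) = (Ioi (s₀ - t)).indicator fun s => f s / t ^ 2 := by
      ext s; simp [K, indicator_apply, sub_lt_comm]
    rw [hK_t, setIntegral_indicator measurableSet_Ioi, integral_div]
  calc ∫ s in I, f s / (s₀ - s) = ∫ s in I, (∫ t in J, K (s, t)) + f s / A := by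
        refine setIntegral_congr_fun measurableSet_Ioc fun s hs => ?_
        have : s₀ - s ≠ 0 := by linarith [hs.2]
        rw [hslice_t s hs]; field_simp; ring
    _ = (∫ s in I, ∫ t in J, K (s, t)) + (∫ s in I, f s) / A := by
        rw [integral_add hK.integral_prod_left (hf.div_const A), integral_div]
    _ = _ := by
        rw [integral_integral_swap (f := fun s t => K (s, t)) hK]; simp_rw [hslice_s]

theorem setIntegral_div_sub_le {f : ℝ → ℝ} {s₀ c A B : ℝ} (hB : 0 < B) (hBA : B ≤ A)
    (hf : IntegrableOn f (Ioc (s₀ - A) s₀)) (hf0 : 0 ≤ f)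
    (hmax : ∀ r ∈ Icc B A, ∫ t in Ioc (s₀ - r) s₀, f t ≤ c * r) :
    ∫ s in Ioc (s₀ - A) (s₀ - B), f s / (s₀ - s) ≤ c * (log A - log B + 1) := by
  have hI : Ioc (s₀ - A) (s₀ - B) ⊆ Ioc (s₀ - A) s₀ := Ioc_subset_Ioc_right (by linarith)
  have htail : ∀ t ∈ Ioc B A,
      (∫ s in Ioc (s₀ - A) (s₀ - B) ∩ Ioi (s₀ - t), f s) / t ^ 2 ≤ c * t⁻¹ := by
    intro t ht
    have ht0 : 0 < t := hB.trans ht.1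
    rw [div_le_iff₀ (by positivity)]
    calc ∫ s in Ioc (s₀ - A) (s₀ - B) ∩ Ioi (s₀ - t), f s
        ≤ ∫ s in Ioc (s₀ - t) s₀, f s := by
          refine setIntegral_mono_set (hf.mono_set (Ioc_subset_Ioc_left (by linarith [ht.2])))
            (ae_of_all _ hf0) (LE.le.eventuallyLE fun s hs => ⟨hs.2, ?_⟩)
          linarith [hs.1.2]
      _ ≤ c * t := hmax t ⟨ht.1.le, ht.2⟩
      _ = c * t⁻¹ * t ^ 2 := by field_simp
  have hhead : (∫ s in Ioc (s₀ - A) (s₀ - B), f s) / A ≤ c := by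
    rw [div_le_iff₀ (hB.trans_le hBA)]
    exact (setIntegral_mono_set hf (ae_of_all _ hf0) (LE.le.eventuallyLE hI)).trans
      (hmax A ⟨hBA, le_rfl⟩)
  have hinv : IntegrableOn (fun t => c * t⁻¹) (Ioc B A) :=
    (ContinuousOn.integrableOn_Icc (continuousOn_const.mul
      (continuousOn_id.inv₀ fun t ht => (hB.trans_le ht.1).ne'))).mono_set Ioc_subset_Icc_self
  rw [setIntegral_div_sub_eq hB (hf.mono_set hI)]
  calc _ ≤ (∫ t in Ioc B A, c * t⁻¹) + c := by
        refine add_le_add (integral_mono_of_nonneg ?_ hinv ?_) hhead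
        · exact ae_of_all _ fun t => div_nonneg (integral_nonneg fun s => hf0 s) (sq_nonneg t)
        · exact ae_restrict_of_forall_mem measurableSet_Ioc htail
    _ = c * (log A - log B + 1) := by
        rw [integral_const_mul, integral_Ioc_inv hB hBA]; ring

theorem stmt15_general (a : ℝ → ℝ) (hmeas : Measurable a)
    (h0 : ∀ s, 0 ≤ a s) (h1 : ∀ s, a s ≤ 1)
    (s₀ c : ℝ)
    (hmax : ∀ r > (0:ℝ), (∫ t in Set.Ioc (s₀ - r) s₀, a t) ≤ c * r)
    (D : ℝ) (hD : 3 ≤ D) :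
    (∫ s in Set.Ioc (s₀ - Real.log D) (s₀ - Real.log (Real.log D)), a s / (s₀ - s))
      ≤ c * (Real.log (Real.log D) - Real.log (Real.log (Real.log D)) + 1) := by
  have hA : 1 < log D := by
    rw [lt_log_iff_exp_lt (by linarith)]; linarith [exp_one_lt_d9]
  have hB : 0 < log (log D) := log_pos hA
  have hBA : log (log D) ≤ log D := (log_le_sub_one_of_pos (by linarith)).trans (by linarith)
  have ha : IntegrableOn a (Ioc (s₀ - log D) s₀) :=
    Measure.integrableOn_of_bounded (M := 1) measure_Ioc_lt_top.ne hmeas.aestronglyMeasurable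
      (ae_of_all _ fun s => by rw [norm_of_nonneg (h0 s)]; exact h1 s)
  exact setIntegral_div_sub_le hB hBA ha h0 fun r hr => hmax r (hB.trans_le hr.1)

/-- The Fubini/layer-cake estimate near a 'multiplicative point of density'. -/
theorem stmt15 (a : ℝ → ℝ) (hmeas : Measurable a)
    (h0 : ∀ s, 0 ≤ a s) (h1 : ∀ s, a s ≤ 1)
    (L : ℝ) (hsupp : ∃ c₀ : ℝ, Function.support a ⊆ Set.Icc c₀ (c₀ + L))
    (s₀ c : ℝ) (hc0 : 0 < c) (hc1 : c < 1)
    (hmax : ∀ r > (0:ℝ), (∫ t in Set.Ioc (s₀ - r) s₀, a t) ≤ c * r)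
    (D : ℝ) (hD : 3 ≤ D) :
    (∫ s in Set.Ioc (s₀ - Real.log D) (s₀ - Real.log (Real.log D)), a s / (s₀ - s))
      ≤ c * (Real.log (Real.log D) - Real.log (Real.log (Real.log D)) + 1) :=
  stmt15_general a hmeas h0 h1 s₀ c hmax D hD
end

section
/- Let g : ℕ → ℂ be a 1-bounded function, h₁ < h₂ < h₃ distinct integers, and suppose that for some sequences 1 ≤ ω_m ≤ x_m tending to infinity and some sign σ ∈ {−1, +1}, the logarithmic averages satisfy E^{log}_{x_m/ω_m ≤ n ≤ x_m} g(n+h₁)g(n+h₂)g(n+h₃) = σ·E^{log}_{x_m/ω_m ≤ n ≤ x_m} g(n+h₁)g(n+h₁+h₃−h₂)g(n+h₃) + o_{m→∞}(1), and additionally E^{log}_{x_m/ω_m ≤ n ≤ x_m} Re(g(n+h₂)·conj(g(n+h₁+h₃−h₂))) = o_{m→∞}(1) with h₂ ≠ h₁+h₃−h₂. Then limsup_{m→∞} |E^{log}_{x_m/ω_m ≤ n ≤ x_m} g(n+h₁)g(n+h₂)g(n+h₃)| ≤ 1/√2. -/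
/-!
Write `S` for the triple correlation and `T` for its companion with `g(n+h₂)` replaced by
`g(n+h₁+h₃-h₂)`, so that `2S = (S + σT) + (S - σT)`. The isotopy hypothesis makes `S - σT`
negligible, while `S + σT` is the average of `g(n+h₁) (g(n+h₂) + σ g(n+h₁+h₃-h₂)) g(n+h₃)`.
By Jensen's inequality for `‖·‖²`, its square is at most the average of
`‖g(n+h₂) + σ g(n+h₁+h₃-h₂)‖² ≤ 2 + 2σ Re (g(n+h₂) conj g(n+h₁+h₃-h₂))`, and by decorrelation
this average tends to `2`. Hence `limsup ‖S‖ ≤ √2 / 2`.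
-/

open Filter

/-- Logarithmic average of `f` over the integers in `[A, B]`. -/
noncomputable def Elog (f : ℕ → ℂ) (A B : ℝ) : ℂ :=
  (∑ n ∈ Finset.Icc ⌈A⌉₊ ⌊B⌋₊, f n / (n : ℂ)) /
    (∑ n ∈ Finset.Icc ⌈A⌉₊ ⌊B⌋₊, (1 : ℂ) / (n : ℂ))

open Finset ComplexConjugate

namespace Finset

variable {ι R E F : Type*} [Field R] [AddCommGroup E] [Module R E] [AddCommGroup F] [Module R F]
  {t : Finset ι}

lemma centerMass_add (w : ι → R) (z z' : ι → E) :
    t.centerMass w (fun i => z i + z' i) = t.centerMass w z + t.centerMass w z' := by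
  simp only [centerMass, smul_add, sum_add_distrib]

lemma map_centerMass (f : E →ₗ[R] F) (w : ι → R) (z : ι → E) :
    f (t.centerMass w z) = t.centerMass w (f ∘ z) := by
  simp only [centerMass, map_smul, map_sum, Function.comp_apply]

lemma centerMass_mono [LinearOrder R] [IsStrictOrderedRing R] {w : ι → R}
    (hw : ∀ i ∈ t, 0 ≤ w i) {z z' : ι → R} (h : ∀ i ∈ t, z i ≤ z' i) :
    t.centerMass w z ≤ t.centerMass w z' :=
  smul_le_smul_of_nonneg_left
    (sum_le_sum fun i hi => smul_le_smul_of_nonneg_left (h i hi) (hw i hi))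
    (inv_nonneg.2 (sum_nonneg hw))

end Finset

lemma Complex.norm_add_mul_sq_le {u v : ℂ} (hu : ‖u‖ ≤ 1) (hv : ‖v‖ ≤ 1) {σ : ℝ}
    (hσ : |σ| = 1) : ‖u + σ * v‖ ^ 2 ≤ 2 + 2 * σ * (u * conj v).re := by
  have hσ2 : σ ^ 2 = 1 := by rw [← sq_abs, hσ, one_pow]
  have hre : (u * conj (σ * v)).re = σ * (u * conj v).re := by
    rw [map_mul, conj_ofReal, mul_left_comm, re_ofReal_mul]
  rw [Complex.sq_norm, Complex.normSq_add, Complex.normSq_mul, Complex.normSq_ofReal, hre,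
    Complex.normSq_eq_norm_sq u, Complex.normSq_eq_norm_sq v]
  nlinarith [norm_nonneg u, norm_nonneg v]

theorem norm_centerMass_mul_add_mul_sq_le {ι : Type*} {t : Finset ι} {w : ι → ℝ}
    (hw : ∀ i ∈ t, 0 ≤ w i) {a u v c : ι → ℂ}
    (ha : ∀ i ∈ t, ‖a i‖ ≤ 1) (hu : ∀ i ∈ t, ‖u i‖ ≤ 1) (hv : ∀ i ∈ t, ‖v i‖ ≤ 1)
    (hc : ∀ i ∈ t, ‖c i‖ ≤ 1) {σ : ℝ} (hσ : |σ| = 1) :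
    ‖t.centerMass w (fun i => a i * (u i + σ * v i) * c i)‖ ^ 2 ≤
      2 + 2 * ‖t.centerMass w (fun i => ((u i * conj (v i)).re : ℂ))‖ := by
  rcases (sum_nonneg hw).eq_or_lt with hW | hW
  · -- with zero total weight, `centerMass` is the junk value `0`
    simp [centerMass, ← hW]
  set ρ : ι → ℝ := fun i => (u i * conj (v i)).re
  have hρ : t.centerMass w (fun i => (ρ i : ℂ)) = ((t.centerMass w ρ : ℝ) : ℂ) :=
    (map_centerMass Complex.ofRealCLM.toLinearMap w ρ).symm
  have hpoint : ∀ i ∈ t, ‖a i * (u i + σ * v i) * c i‖ ^ 2 ≤ 2 + 2 * σ * ρ i := by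
    intro i hi
    refine le_trans (pow_le_pow_left₀ (norm_nonneg _) ?_ 2)
      (Complex.norm_add_mul_sq_le (hu i hi) (hv i hi) hσ)
    rw [norm_mul, norm_mul]
    exact (mul_le_of_le_one_right (by positivity) (hc i hi)).trans
      (mul_le_of_le_one_left (norm_nonneg _) (ha i hi))
  calc ‖t.centerMass w (fun i => a i * (u i + σ * v i) * c i)‖ ^ 2
      ≤ t.centerMass w (fun i => ‖a i * (u i + σ * v i) * c i‖ ^ 2) :=
        (convexOn_univ_norm.pow (fun z _ => norm_nonneg z) 2).map_centerMass_le hw hW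
          fun _ _ => Set.mem_univ _
    _ ≤ t.centerMass w (fun i => 2 + (2 * σ) • ρ i) := centerMass_mono hw hpoint
    _ = 2 + 2 * σ * t.centerMass w ρ := by
        rw [centerMass_add, centerMass_smul, smul_eq_mul]
        rw [show (fun _ : ι => (2 : ℝ)) = Function.const ι 2 from rfl, centerMass_const hW.ne']
    _ ≤ 2 + 2 * ‖t.centerMass w (fun i => (ρ i : ℂ))‖ := by
        have h := le_abs_self (σ * t.centerMass w ρ)
        rw [abs_mul, hσ, one_mul] at h
        rw [hρ, Complex.norm_real, Real.norm_eq_abs, mul_assoc]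
        linarith

lemma Elog_eq_centerMass (f : ℕ → ℂ) (A B : ℝ) :
    Elog f A B = (Icc ⌈A⌉₊ ⌊B⌋₊).centerMass (fun n => (n : ℝ)⁻¹) f := by
  simp only [Elog, centerMass, Complex.real_smul, Complex.ofReal_inv, Complex.ofReal_sum,
    Complex.ofReal_natCast, div_eq_inv_mul, mul_one]

lemma Elog_add_mul (f f' : ℕ → ℂ) (c : ℂ) (A B : ℝ) :
    Elog (fun n => f n + c * f' n) A B = Elog f A B + c * Elog f' A B := by
  simp only [Elog, add_div, sum_add_distrib, mul_div_assoc, ← mul_sum]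

theorem stmt18_general (g : ℤ → ℂ) (hg : ∀ n, ‖g n‖ ≤ 1)
    (h₁ h₂ h₃ : ℤ)
    (x ω : ℕ → ℝ)
    (σ : ℂ) (hσ : σ = 1 ∨ σ = -1)
    (hiso : Filter.Tendsto (fun m =>
        Elog (fun n => g ((n : ℤ) + h₁) * g ((n : ℤ) + h₂) * g ((n : ℤ) + h₃))
            (x m / ω m) (x m)
          - σ * Elog (fun n =>
              g ((n : ℤ) + h₁) * g ((n : ℤ) + h₁ + h₃ - h₂) * g ((n : ℤ) + h₃))
            (x m / ω m) (x m))
      Filter.atTop (nhds 0))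
    (hdecorr : Filter.Tendsto (fun m =>
        Elog (fun n =>
            ((g ((n : ℤ) + h₂) * (starRingEnd ℂ) (g ((n : ℤ) + h₁ + h₃ - h₂))).re : ℂ))
          (x m / ω m) (x m))
      Filter.atTop (nhds 0)) :
    Filter.limsup (fun m =>
        ‖Elog (fun n =>
            g ((n : ℤ) + h₁) * g ((n : ℤ) + h₂) * g ((n : ℤ) + h₃))
          (x m / ω m) (x m)‖)
      Filter.atTop ≤ 1 / Real.sqrt 2 := by
  obtain ⟨s, rfl, hs⟩ : ∃ s : ℝ, σ = s ∧ |s| = 1 := by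
    rcases hσ with rfl | rfl
    exacts [⟨1, by simp, abs_one⟩, ⟨-1, by simp, by simp⟩]
  set S := fun m => Elog (fun n => g (n + h₁) * g (n + h₂) * g (n + h₃)) (x m / ω m) (x m)
  set T := fun m => Elog (fun n => g (n + h₁) * g (n + h₁ + h₃ - h₂) * g (n + h₃))
    (x m / ω m) (x m)
  set E := fun m => Elog (fun n => ((g (n + h₂) * conj (g (n + h₁ + h₃ - h₂))).re : ℂ))
    (x m / ω m) (x m)
  have hbound : ∀ m, ‖S m‖ ≤ (√(2 + 2 * ‖E m‖) + ‖S m - s * T m‖) / 2 := by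
    intro m
    have hsum : ‖S m + s * T m‖ ≤ √(2 + 2 * ‖E m‖) := by
      have hcomb : S m + s * T m = Elog (fun n => g (n + h₁) *
          (g (n + h₂) + s * g (n + h₁ + h₃ - h₂)) * g (n + h₃)) (x m / ω m) (x m) := by
        rw [← Elog_add_mul]
        congr 1
        funext n
        ring
      rw [hcomb]
      simp only [E, Elog_eq_centerMass]
      exact Real.le_sqrt_of_sq_le (norm_centerMass_mul_add_mul_sq_le
        (fun n _ => inv_nonneg.2 n.cast_nonneg) (fun n _ => hg _) (fun n _ => hg _)
        (fun n _ => hg _) (fun n _ => hg _) hs)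
    have h2S := norm_add_le (S m + s * T m) (S m - s * T m)
    rw [add_add_sub_cancel, ← two_mul, norm_mul, Complex.norm_two] at h2S
    linarith
  have hlim : Tendsto (fun m => (√(2 + 2 * ‖E m‖) + ‖S m - s * T m‖) / 2) atTop
      (nhds (1 / √2)) := by
    simpa [Real.sqrt_div_self'] using
      ((((hdecorr.norm.const_mul 2).const_add 2).sqrt).add hiso.norm).div_const 2
  exact (limsup_le_limsup (Eventually.of_forall hbound)
    (isCoboundedUnder_le_of_le atTop fun m => norm_nonneg (S m))
    hlim.isBoundedUnder_le).trans hlim.limsup_eq.le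

/-- Savings in the logarithmic three-point Elliott conjecture: under the isotopy
identity and the two-point decorrelation hypothesis, the triple correlation is
bounded by `1/√2` in the limit. -/
theorem stmt18 (g : ℤ → ℂ) (hg : ∀ n, ‖g n‖ ≤ 1)
    (h₁ h₂ h₃ : ℤ) (h12 : h₁ < h₂) (h23 : h₂ < h₃)
    (x ω : ℕ → ℝ) (hω1 : ∀ m, 1 ≤ ω m) (hωx : ∀ m, ω m ≤ x m)
    (hω : Filter.Tendsto ω Filter.atTop Filter.atTop)
    (hx : Filter.Tendsto x Filter.atTop Filter.atTop)
    (σ : ℂ) (hσ : σ = 1 ∨ σ = -1)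
    (hiso : Filter.Tendsto (fun m =>
        Elog (fun n => g ((n : ℤ) + h₁) * g ((n : ℤ) + h₂) * g ((n : ℤ) + h₃))
            (x m / ω m) (x m)
          - σ * Elog (fun n =>
              g ((n : ℤ) + h₁) * g ((n : ℤ) + h₁ + h₃ - h₂) * g ((n : ℤ) + h₃))
            (x m / ω m) (x m))
      Filter.atTop (nhds 0))
    (hne : h₂ ≠ h₁ + h₃ - h₂)
    (hdecorr : Filter.Tendsto (fun m =>
        Elog (fun n =>
            ((g ((n : ℤ) + h₂) * (starRingEnd ℂ) (g ((n : ℤ) + h₁ + h₃ - h₂))).re : ℂ))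
          (x m / ω m) (x m))
      Filter.atTop (nhds 0)) :
    Filter.limsup (fun m =>
        ‖Elog (fun n =>
            g ((n : ℤ) + h₁) * g ((n : ℤ) + h₂) * g ((n : ℤ) + h₃))
          (x m / ω m) (x m)‖)
      Filter.atTop ≤ 1 / Real.sqrt 2 :=
  stmt18_general g hg h₁ h₂ h₃ x ω σ hσ hiso hdecorr
end
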